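/- arXiv:1807.06692 — 6 statements merged into one kernel-verified Lean document; each statement's English description precedes it below -/
import Mathlib

section
/- Let n ≥ 2 and let (x,k), (y,l) ∈ G_n = Z_2 ≀ Z_n with k ≠ l. Let p₁ ∈ {1, ..., n−1} satisfy p₁ ≡ l − k (mod n) and let p₂ = n − p₁, so that p₁ and p₂ are the lengths of the two paths Q₁ = (k, k+1, ..., k+p₁ = l) and Q₂ = (k, k−1, ..., k−p₂ = l) joining k to l in the cycle Z_n. For i = 1, 2 let g_i be the maximum, over pairs of distinct vertices u, v of Q_i such that no vertex lying strictly between u and v along Q_i belongs to x △ y, of the distance from u to v along Q_i (so g_i ≥ 1). Then min{p₁ + 2(p₂ − g₂), p₂ + 2(p₁ − g₁)} ≤ ρ((x,k),(y,l)) ≤ min{p₁ + 2(p₂ − g₂), p₂ + 2(p₁ − g₁)} + 2. -/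
open scoped symmDiff

/-- Elements of the lamplighter group `Z₂ ≀ Z_n`: a set of lit lamps and a position. -/
abbrev Lamp (n : ℕ) := Set (ZMod n) × ZMod n

/-- Group multiplication `(x,g)·(y,h) = (x △ (g+y), g+h)`. -/
def lampMul {n : ℕ} (u v : Lamp n) : Lamp n :=
  (u.1 ∆ ((u.2 + ·) '' v.1), u.2 + v.2)

/-- Group inverse in the lamplighter group. -/
def lampInv {n : ℕ} (u : Lamp n) : Lamp n :=
  ((· - u.2) '' u.1, -u.2)

/-- The generator `t = (∅, 1)`. -/
def lampT (n : ℕ) : Lamp n := (∅, 1)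

/-- The generator `a = ({0}, 0)`. -/
def lampA (n : ℕ) : Lamp n := ({0}, 0)

/-- The generator `ta`. -/
def lampTA (n : ℕ) : Lamp n := lampMul (lampT n) (lampA n)

/-- Word metric w.r.t. a generating set `S`: the least `m` such that `u⁻¹v`
is a product of `m` elements of `S ∪ S⁻¹`, i.e. `v = u·s₁⋯s_m`. -/
noncomputable def wordDist {n : ℕ} (S : Set (Lamp n)) (u v : Lamp n) : ℕ :=
  sInf {m | ∃ w : List (Lamp n), w.length = m ∧
    (∀ s ∈ w, s ∈ S ∨ ∃ g ∈ S, s = lampInv g) ∧ v = w.foldl lampMul u}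

/-- The word metric `ρ` on `Z₂ ≀ Z_n` w.r.t. the generating set `{t, ta}`. -/
noncomputable def lampDist (n : ℕ) (u v : Lamp n) : ℕ :=
  wordDist {lampT n, lampTA n} u v

/-- Length of the longest common prefix of two vertices of the binary tree. -/
def lgc : List Bool → List Bool → ℕ
  | a :: as, b :: bs => if a = b then lgc as bs + 1 else 0
  | _, _ => 0

/-- Graph distance in the binary tree (vertices = `{0,1}`-sequences). -/
def treeDist (A B : List Bool) : ℕ := A.length + B.length - 2 * lgc A B

/-- The arc `{a, a+1, ..., a+m}` in `Z_n`. -/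
def arcSet (n : ℕ) (a : ZMod n) (m : ℕ) : Set (ZMod n) :=
  {z | ∃ i ≤ m, z = a + (i : ZMod n)}

/-- The arc `P₁ = {n/6, ..., 5n/6}` of `Z_n` (identified with `{0,...,n-1}` via `val`). -/
def P1set (n : ℕ) : Set (ZMod n) := {z | n / 6 ≤ z.val ∧ z.val ≤ 5 * n / 6}

/-- The subset `P_{1,n} = {(x,k) ∈ G_n : k ∈ P₁}`. -/
def lampP1 (n : ℕ) : Set (Lamp n) := {u | u.2 ∈ P1set n}

/-- The set `W_n ⊆ T_n × T_n`. -/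
def Wset (n : ℕ) : Set (List Bool × List Bool) :=
  {p | p.1.length + p.2.length = n ∧ n / 6 ≤ p.1.length ∧ p.1.length ≤ 5 * n / 6}

open Classical in
/-- The map `φ_{1,n} : P_{1,n} → W_n`. -/
noncomputable def phi1 (n : ℕ) (u : Lamp n) : List Bool × List Bool :=
  ((List.range u.2.val).map fun j => if ((j : ℕ) : ZMod n) ∈ u.1 then true else false,
   (List.range (n - u.2.val)).map fun i => if ((n - 1 - i : ℕ) : ZMod n) ∈ u.1 then true else false)

/-- "X admits an equivalent uniformly convex norm" (= superreflexivity, by Enflo). -/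
def HasEquivUnifConvexNorm (X : Type*) [NormedAddCommGroup X] [NormedSpace ℝ X] : Prop :=
  ∃ N : X → ℝ,
    (∀ x, N x = 0 ↔ x = 0) ∧
    (∀ (c : ℝ) (x : X), N (c • x) = |c| * N x) ∧
    (∀ x y, N (x + y) ≤ N x + N y) ∧
    (∃ c₁ > (0 : ℝ), ∃ c₂ > (0 : ℝ), ∀ x, c₁ * ‖x‖ ≤ N x ∧ N x ≤ c₂ * ‖x‖) ∧
    (∀ ε > (0 : ℝ), ∃ δ > (0 : ℝ), ∀ x y,
      N x ≤ 1 → N y ≤ 1 → ε ≤ N (x - y) → N (x + y) ≤ 2 - δ)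

/-!
Write `D = x ∆ y`. A letter `t^{±1}`, `(ta)^{±1}` moves the lamplighter by one step and can only
toggle the lamp it enters or leaves. Lifting the positions of a word of length `m` to `ℤ` gives a
unit-step walk from `0` to some `T ≡ l - k (mod n)` with range `[A, B]`; every lamp of `D` is
`k + e` for some `e ∈ [A, B]`, and visiting both extremes costs `m ≥ 2(B - A) - |T|`. If `T = p₁`, the points of `Q₂`
outside `k + [A, B]` form a `D`-free stretch of length at least `p₂ - (B - A - p₁)`, whence
`m ≥ p₁ + 2(p₂ - g₂)`; `T = -p₂` is the mirror image, and for any other `T` already `m ≥ |T|`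
suffices.

Conversely, for a longest gap `(i, j)` of `Q₁`, sweep up from `k` to `k + i` toggling `D`, walk
back, sweep down around the cycle to `k + j - 1 - n` toggling `D`, and walk up to `l`: that is
`p₂ + 2(p₁ - g₁) + 2` letters. The same construction, mirrored, works for `Q₂`.
-/

namespace Lamp

variable {n : ℕ}

def IsLetter (s : Lamp n) : Prop :=
  s ∈ ({lampT n, lampTA n} : Set (Lamp n)) ∨
    ∃ g ∈ ({lampT n, lampTA n} : Set (Lamp n)), s = lampInv g

def Joins (u v : Lamp n) (m : ℕ) : Prop :=
  ∃ w : List (Lamp n), w.length = m ∧ (∀ s ∈ w, IsLetter s) ∧ v = w.foldl lampMul u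

theorem lampDist_le {u v : Lamp n} {m : ℕ} (h : Joins u v m) : lampDist n u v ≤ m :=
  Nat.sInf_le h

theorem le_lampDist {u v : Lamp n} {c : ℕ} (hne : ∃ m, Joins u v m)
    (h : ∀ m, Joins u v m → c ≤ m) : c ≤ lampDist n u v :=
  le_csInf hne h

theorem Joins.refl (u : Lamp n) : Joins u u 0 := ⟨[], rfl, by simp, rfl⟩

theorem Joins.trans {u v w : Lamp n} {a b : ℕ} (h₁ : Joins u v a) (h₂ : Joins v w b) :
    Joins u w (a + b) := by
  obtain ⟨w₁, rfl, hw₁, rfl⟩ := h₁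
  obtain ⟨w₂, rfl, hw₂, rfl⟩ := h₂
  refine ⟨w₁ ++ w₂, List.length_append, ?_, (List.foldl_append ..).symm⟩
  simp only [List.mem_append]
  rintro s (hs | hs)
  exacts [hw₁ s hs, hw₂ s hs]

theorem Joins.letter (u : Lamp n) {s : Lamp n} (hs : IsLetter s) : Joins u (lampMul u s) 1 :=
  ⟨[s], rfl, by simpa using hs, rfl⟩

theorem lampTA_eq : lampTA n = ({1}, 1) := by
  ext p <;> simp [lampTA, lampMul, lampT, lampA, Set.mem_symmDiff]

theorem mul_lampT (z : Set (ZMod n)) (g : ZMod n) : lampMul (z, g) (lampT n) = (z, g + 1) := by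
  simp [lampMul, lampT]

theorem mul_lampTA (z : Set (ZMod n)) (g : ZMod n) :
    lampMul (z, g) (lampTA n) = (z ∆ {g + 1}, g + 1) := by
  simp [lampTA_eq, lampMul]

theorem mul_inv_lampT (z : Set (ZMod n)) (g : ZMod n) :
    lampMul (z, g) (lampInv (lampT n)) = (z, g - 1) := by
  simp [lampMul, lampInv, lampT, sub_eq_add_neg]

theorem mul_inv_lampTA (z : Set (ZMod n)) (g : ZMod n) :
    lampMul (z, g) (lampInv (lampTA n)) = (z ∆ {g}, g - 1) := by
  simp [lampTA_eq, lampMul, lampInv, sub_eq_add_neg]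

theorem Joins.step_up (D z : Set (ZMod n)) (g : ZMod n) :
    Joins (z, g) (z ∆ (D ∩ {g + 1}), g + 1) 1 := by
  by_cases h : g + 1 ∈ D
  · rw [Set.inter_singleton_of_mem h, ← mul_lampTA]
    exact .letter _ (.inl (.inr rfl))
  · rw [Set.inter_singleton_eq_empty.2 h, ← Set.bot_eq_empty, symmDiff_bot, ← mul_lampT]
    exact .letter _ (.inl (.inl rfl))

theorem Joins.step_down (D z : Set (ZMod n)) (g : ZMod n) :
    Joins (z, g) (z ∆ (D ∩ {g}), g - 1) 1 := by
  by_cases h : g ∈ D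
  · rw [Set.inter_singleton_of_mem h, ← mul_inv_lampTA]
    exact .letter _ (.inr ⟨_, .inr rfl, rfl⟩)
  · rw [Set.inter_singleton_eq_empty.2 h, ← Set.bot_eq_empty, symmDiff_bot, ← mul_inv_lampT]
    exact .letter _ (.inr ⟨_, .inl rfl, rfl⟩)

theorem natCast_injOn_Iio : Set.InjOn (Nat.cast : ℕ → ZMod n) (Set.Iio n) := fun a ha b hb h => by
  simpa [Nat.mod_eq_of_lt ha, Nat.mod_eq_of_lt hb] using (ZMod.natCast_eq_natCast_iff' a b n).1 h

theorem Joins.sweep {D : Set (ZMod n)} {pos f : ℕ → ZMod n} {c : ℕ}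
    (hstep : ∀ r z, Joins (z, pos r) (z ∆ (D ∩ {f r}), pos (r + 1)) 1)
    (hf : Set.InjOn f (Set.Iio c)) (z : Set (ZMod n)) :
    Joins (z, pos 0) (z ∆ (D ∩ f '' Set.Iio c), pos c) c := by
  induction c with
  | zero => convert Joins.refl (z, pos 0); ext; simp [Set.mem_symmDiff]
  | succ c ih =>
    have hfc : f c ∉ f '' Set.Iio c := by
      rintro ⟨r, hr, he⟩
      exact (Set.mem_Iio.1 hr).ne (hf (Set.mem_Iio.2 (by simp at hr; omega)) (by simp) he)
    have hdisj : Disjoint (D ∩ f '' Set.Iio c) (D ∩ {f c}) :=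
      (Set.disjoint_singleton_right.2 hfc).mono Set.inter_subset_right Set.inter_subset_right
    have h := (ih (hf.mono (Set.Iio_subset_Iio (by omega)))).trans (hstep c _)
    rw [symmDiff_assoc, hdisj.symmDiff_eq_sup] at h
    rwa [Set.Iio_add_one_eq_Iic, ← Set.Iio_insert, Set.image_insert_eq, ← Set.union_singleton,
      Set.inter_union_distrib_left]

/-- `arcUp k a = {k+1, …, k+a}` and `arcDown k b = {k, k-1, …, k-b+1}`: an upward sweep toggles
the lamp it enters, a downward sweep the lamp it leaves. -/
def arcUp (k : ZMod n) (a : ℕ) : Set (ZMod n) := (fun r : ℕ => k + r + 1) '' Set.Iio a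

def arcDown (k : ZMod n) (b : ℕ) : Set (ZMod n) := (fun r : ℕ => k - r) '' Set.Iio b

theorem Joins.sweep_up (D z : Set (ZMod n)) (g : ZMod n) {c : ℕ} (hc : c ≤ n) :
    Joins (z, g) (z ∆ (D ∩ arcUp g c), g + c) c := by
  have hinj : Set.InjOn (fun r : ℕ => g + r + 1) (Set.Iio c) := fun a ha b hb h =>
    natCast_injOn_Iio (lt_of_lt_of_le ha hc) (lt_of_lt_of_le hb hc) (by simpa using h)
  simpa [arcUp] using Joins.sweep (pos := fun r : ℕ => g + (r : ZMod n))
    (fun r z => by simpa [add_assoc] using Joins.step_up D z (g + (r : ZMod n))) hinj z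

theorem Joins.sweep_down (D z : Set (ZMod n)) (g : ZMod n) {c : ℕ} (hc : c ≤ n) :
    Joins (z, g) (z ∆ (D ∩ arcDown g c), g - c) c := by
  have hinj : Set.InjOn (fun r : ℕ => g - r) (Set.Iio c) := fun a ha b hb h =>
    natCast_injOn_Iio (lt_of_lt_of_le ha hc) (lt_of_lt_of_le hb hc) (by simpa using h)
  simpa [arcDown] using Joins.sweep (pos := fun r : ℕ => g - (r : ZMod n))
    (fun r z => by simpa [sub_sub] using Joins.step_down D z (g - (r : ZMod n))) hinj z

theorem Joins.move_up (z : Set (ZMod n)) (g : ZMod n) :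
    ∀ c : ℕ, Joins (z, g) (z, g + (c : ZMod n)) c
  | 0 => by simpa using Joins.refl (z, g)
  | c + 1 => by
    simpa [add_assoc, mul_lampT] using (move_up z g c).trans (.letter _ (.inl (.inl rfl)))

theorem Joins.move_down (z : Set (ZMod n)) (g : ZMod n) :
    ∀ c : ℕ, Joins (z, g) (z, g - (c : ZMod n)) c
  | 0 => by simpa using Joins.refl (z, g)
  | c + 1 => by
    simpa [sub_sub, mul_inv_lampT] using
      (move_down z g c).trans (.letter _ (.inr ⟨_, .inl rfl, rfl⟩))

theorem disjoint_arcUp_arcDown (k : ZMod n) {a b : ℕ} (hab : a + b ≤ n) :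
    Disjoint (arcUp k a) (arcDown k b) := by
  rintro s hsU hsD z hz
  obtain ⟨r, hr, rfl⟩ := hsU hz
  obtain ⟨r', hr', he⟩ := hsD hz
  have h0 : ((r + 1 + r' : ℕ) : ZMod n) = 0 := by
    push_cast
    linear_combination -he
  have := Nat.le_of_dvd (by omega) ((ZMod.natCast_eq_zero_iff _ n).1 h0)
  simp only [Set.mem_Iio] at hr hr'
  omega

theorem symmDiff_inter_arcs {D : Set (ZMod n)} {k : ZMod n} {a b : ℕ} (hab : a + b ≤ n)
    (hD : D ⊆ arcUp k a ∪ arcDown k b) : (D ∩ arcUp k a) ∆ (D ∩ arcDown k b) = D := by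
  rw [← Set.inter_symmDiff_distrib_left, (disjoint_arcUp_arcDown k hab).symmDiff_eq_sup]
  exact Set.inter_eq_left.2 hD

theorem Joins.toggle_up_first {D : Set (ZMod n)} {k : ZMod n} {a b : ℕ} (hab : a + b ≤ n)
    (hD : D ⊆ arcUp k a ∪ arcDown k b) (z : Set (ZMod n)) (c : ℕ) :
    Joins (z, k) (z ∆ D, k - b + c) (2 * a + b + c) := by
  have h := (Joins.sweep_up D z k (c := a) (by omega)).trans (Joins.move_down _ _ a)
  rw [add_sub_cancel_right] at h
  have h' := (h.trans (Joins.sweep_down D _ k (c := b) (by omega))).trans (Joins.move_up _ _ c)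
  rwa [symmDiff_assoc, symmDiff_inter_arcs hab hD, ← two_mul] at h'

theorem Joins.toggle_down_first {D : Set (ZMod n)} {k : ZMod n} {a b : ℕ} (hab : a + b ≤ n)
    (hD : D ⊆ arcUp k a ∪ arcDown k b) (z : Set (ZMod n)) (c : ℕ) :
    Joins (z, k) (z ∆ D, k + a - c) (a + 2 * b + c) := by
  have h := (Joins.sweep_down D z k (c := b) (by omega)).trans (Joins.move_up _ _ b)
  rw [sub_add_cancel] at h
  have h' := (h.trans (Joins.sweep_up D _ k (c := a) (by omega))).trans (Joins.move_down _ _ c)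
  rwa [symmDiff_assoc, symmDiff_comm (D ∩ _), symmDiff_inter_arcs hab hD,
    show b + b + a = a + 2 * b by ring] at h'

theorem exists_eq_add_natCast [NeZero n] (k z : ZMod n) : ∃ m < n, z = k + (m : ZMod n) :=
  ⟨(z - k).val, ZMod.val_lt _, by rw [ZMod.natCast_zmod_val]; ring⟩

theorem subset_arcs_of_gap_up [NeZero n] {D : Set (ZMod n)} {k : ZMod n} {i j : ℕ}
    (hj : j ≤ n) (hgap : ∀ m : ℕ, i < m → m < j → k + (m : ZMod n) ∉ D) :
    D ⊆ arcUp k i ∪ arcDown k (n - j + 1) := by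
  intro z hz
  obtain ⟨m, hm, rfl⟩ := exists_eq_add_natCast k z
  rcases Nat.eq_zero_or_pos m with rfl | hm0
  · exact .inr ⟨0, by simp, by simp⟩
  rcases le_or_gt m i with hmi | hmi
  · exact .inl ⟨m - 1, by simp; omega, by push_cast [Nat.cast_sub hm0]; ring⟩
  rcases lt_or_ge m j with hmj | hmj
  · exact absurd hz (hgap m hmi hmj)
  · refine .inr ⟨n - m, by simp; omega, ?_⟩
    push_cast [Nat.cast_sub hm.le, ZMod.natCast_self]
    ring

theorem subset_arcs_of_gap_down [NeZero n] {D : Set (ZMod n)} {k : ZMod n} {i j : ℕ}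
    (hj : j ≤ n) (hgap : ∀ m : ℕ, i < m → m < j → k - (m : ZMod n) ∉ D) :
    D ⊆ arcUp k (n - j) ∪ arcDown k (i + 1) := by
  intro z hz
  obtain ⟨m, hm, hkz⟩ := exists_eq_add_natCast z k
  obtain rfl : z = k - m := by rw [hkz]; ring
  rcases le_or_gt m i with hmi | hmi
  · exact .inr ⟨m, by simp; omega, rfl⟩
  rcases lt_or_ge m j with hmj | hmj
  · exact absurd hz (hgap m hmi hmj)
  · refine .inl ⟨n - m - 1, by simp; omega, ?_⟩
    push_cast [Nat.cast_sub (show 1 ≤ n - m by omega), Nat.cast_sub hm.le, ZMod.natCast_self]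
    ring

theorem Joins.of_gap_up {x y : Set (ZMod n)} {k : ZMod n} {p i j : ℕ} (hij : i < j)
    (hjp : j ≤ p) (hp : p < n) (hgap : ∀ m : ℕ, i < m → m < j → k + (m : ZMod n) ∉ x ∆ y) :
    Joins (x, k) (y, k + p) (n - p + 2 * (p - (j - i)) + 2) := by
  have : NeZero n := ⟨by omega⟩
  have h := Joins.toggle_up_first (by omega) (subset_arcs_of_gap_up (by omega) hgap) x (p - j + 1)
  have hpos : k - ((n - j + 1 : ℕ) : ZMod n) + ((p - j + 1 : ℕ) : ZMod n) = k + p := by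
    push_cast [Nat.cast_sub (show j ≤ n by omega), Nat.cast_sub hjp, ZMod.natCast_self]
    ring
  rwa [symmDiff_symmDiff_cancel_left, hpos,
    show 2 * i + (n - j + 1) + (p - j + 1) = n - p + 2 * (p - (j - i)) + 2 by omega] at h

theorem Joins.of_gap_down {x y : Set (ZMod n)} {k : ZMod n} {q i j : ℕ} (hij : i < j)
    (hjq : j ≤ q) (hq : q < n) (hgap : ∀ m : ℕ, i < m → m < j → k - (m : ZMod n) ∉ x ∆ y) :
    Joins (x, k) (y, k - q) (n - q + 2 * (q - (j - i)) + 2) := by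
  have : NeZero n := ⟨by omega⟩
  have h := Joins.toggle_down_first (by omega) (subset_arcs_of_gap_down (by omega) hgap) x
    (q - j)
  have hpos : k + ((n - j : ℕ) : ZMod n) - ((q - j : ℕ) : ZMod n) = k - q := by
    push_cast [Nat.cast_sub (show j ≤ n by omega), Nat.cast_sub hjq, ZMod.natCast_self]
    ring
  rwa [symmDiff_symmDiff_cancel_left, hpos,
    show n - j + 2 * (i + 1) + (q - j) = n - q + 2 * (q - (j - i)) + 2 by omega] at h

theorem IsLetter.step {s : Lamp n} (hs : IsLetter s) (x : Set (ZMod n)) (k : ZMod n) :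
    ∃ d : ℤ, |d| ≤ 1 ∧ (lampMul (x, k) s).2 = k + d ∧
      x ∆ (lampMul (x, k) s).1 ⊆ {k, k + (d : ZMod n)} := by
  rcases hs with (rfl | rfl) | ⟨g, (rfl | rfl), rfl⟩
  · exact ⟨1, by norm_num, by simp [mul_lampT], by simp [mul_lampT]⟩
  · exact ⟨1, by norm_num, by simp [mul_lampTA], by simp [mul_lampTA]⟩
  · exact ⟨-1, by norm_num, by simp [mul_inv_lampT, sub_eq_add_neg], by simp [mul_inv_lampT]⟩
  · exact ⟨-1, by norm_num, by simp [mul_inv_lampTA, sub_eq_add_neg], by simp [mul_inv_lampTA]⟩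

theorem Joins.exists_lift {x y : Set (ZMod n)} {k l : ZMod n} {m : ℕ}
    (h : Joins (x, k) (y, l) m) :
    ∃ u : ℕ → ℤ, u 0 = 0 ∧ (∀ j, |u (j + 1) - u j| ≤ 1) ∧ l = k + u m ∧
      ∀ p ∈ x ∆ y, ∃ j ≤ m, p = k + u j := by
  obtain ⟨w, rfl, hw, hfold⟩ := h
  induction w generalizing x k with
  | nil =>
    obtain ⟨rfl, rfl⟩ := Prod.mk.inj hfold
    exact ⟨0, rfl, by simp, by simp, by simp⟩
  | cons s w ih =>
    obtain ⟨d, hd, hpos, hlamps⟩ := (hw s List.mem_cons_self).step x k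
    obtain ⟨u, hu0, hu, hl, hvis⟩ :=
      ih (x := (lampMul (x, k) s).1) (k := (lampMul (x, k) s).2)
        (fun t ht => hw t (List.mem_cons_of_mem s ht)) hfold
    refine ⟨fun | 0 => 0 | j + 1 => d + u j, rfl, ?_, ?_, ?_⟩
    · rintro (_ | j)
      · simpa [hu0] using hd
      · simpa using hu j
    · rw [hl, hpos, List.length_cons]; push_cast; ring
    · intro p hp
      rcases symmDiff_triangle x (lampMul (x, k) s).1 y hp with hp | hp
      · rcases hlamps hp with rfl | rfl
        · exact ⟨0, by omega, by simp⟩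
        · exact ⟨1, by simp, by simp [hu0]⟩
      · obtain ⟨j, hj, rfl⟩ := hvis p hp
        exact ⟨j + 1, by simpa using hj, by rw [hpos]; push_cast; ring⟩

theorem abs_sub_le_of_abs_step_le_one {u : ℕ → ℤ} (hu : ∀ j, |u (j + 1) - u j| ≤ 1)
    {i j : ℕ} (hij : i ≤ j) : |u j - u i| ≤ j - i := by
  induction j, hij using Nat.le_induction with
  | base => simp
  | succ j _ ih =>
    calc |u (j + 1) - u i| ≤ |u (j + 1) - u j| + |u j - u i| := abs_sub_le _ _ _
      _ ≤ (j + 1 : ℕ) - i := by push_cast; linarith [hu j]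

/-- A unit-step walk that visits `u i` and `u j` travels between them, and beyond its net
displacement it has to come back. -/
theorem two_mul_sub_sub_abs_le {u : ℕ → ℤ} (hu : ∀ j, |u (j + 1) - u j| ≤ 1) {m i j : ℕ}
    (hi : i ≤ m) (hj : j ≤ m) : 2 * (u j - u i) - |u m - u 0| ≤ m := by
  have key := fun a b (hab : a ≤ b) => abs_le.1 (abs_sub_le_of_abs_step_le_one hu hab)
  have hT := neg_abs_le (u m - u 0)
  have hT' := le_abs_self (u m - u 0)
  rcases le_total i j with hij | hij
  · have := key 0 i (by omega); have := key i j hij; have := key j m hj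
    push_cast at *; linarith
  · have := key 0 j (by omega); have := key j i hij; have := key i m hi
    push_cast at *; linarith

theorem Joins.exists_range {x y : Set (ZMod n)} {k l : ZMod n} {m : ℕ}
    (h : Joins (x, k) (y, l) m) :
    ∃ A B T : ℤ, A ≤ 0 ∧ A ≤ T ∧ 0 ≤ B ∧ T ≤ B ∧ 2 * (B - A) - |T| ≤ m ∧ l = k + T ∧
      ∀ p ∈ x ∆ y, ∃ e : ℤ, A ≤ e ∧ e ≤ B ∧ p = k + e := by
  obtain ⟨u, hu0, hu, hl, hvis⟩ := h.exists_lift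
  obtain ⟨i, hi, hmin⟩ := (Finset.range (m + 1)).exists_min_image u ⟨0, by simp⟩
  obtain ⟨j, hj, hmax⟩ := (Finset.range (m + 1)).exists_max_image u ⟨0, by simp⟩
  simp only [Finset.mem_range, Nat.lt_succ_iff] at hi hj hmin hmax
  refine ⟨u i, u j, u m, hu0 ▸ hmin 0 (by omega), hmin m le_rfl, hu0 ▸ hmax 0 (by omega),
    hmax m le_rfl, by simpa [hu0] using two_mul_sub_sub_abs_le hu hi hj, hl, fun p hp => ?_⟩
  obtain ⟨r, hr, rfl⟩ := hvis p hp
  exact ⟨u r, hmin r hr, hmax r hr, rfl⟩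

def gapLengths (D : Set (ZMod n)) (path : ℕ → ZMod n) (q : ℕ) : Set ℕ :=
  {d | ∃ i j : ℕ, i < j ∧ j ≤ q ∧ d = j - i ∧ ∀ m : ℕ, i < m → m < j → path m ∉ D}

noncomputable def maxGap (D : Set (ZMod n)) (path : ℕ → ZMod n) (q : ℕ) : ℕ :=
  sSup (gapLengths D path q)

theorem bddAbove_gapLengths (D : Set (ZMod n)) (path : ℕ → ZMod n) (q : ℕ) :
    BddAbove (gapLengths D path q) :=
  ⟨q, by rintro d ⟨i, j, -, hj, rfl, -⟩; omega⟩

theorem le_maxGap {D : Set (ZMod n)} {path : ℕ → ZMod n} {q i j : ℕ} (hij : i < j) (hj : j ≤ q)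
    (hgap : ∀ m : ℕ, i < m → m < j → path m ∉ D) : j - i ≤ maxGap D path q :=
  le_csSup (bddAbove_gapLengths D path q) ⟨i, j, hij, hj, rfl, hgap⟩

theorem exists_maxGap (D : Set (ZMod n)) (path : ℕ → ZMod n) {q : ℕ} (hq : 1 ≤ q) :
    ∃ i j : ℕ, i < j ∧ j ≤ q ∧ maxGap D path q = j - i ∧
      ∀ m : ℕ, i < m → m < j → path m ∉ D :=
  Nat.sSup_mem (s := gapLengths D path q) ⟨1, 0, 1, one_pos, hq, rfl, fun _ h₁ h₂ => by omega⟩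
    (bddAbove_gapLengths D path q)

theorem maxGap_add_eq (D : Set (ZMod n)) (k : ZMod n) (q : ℕ) :
    maxGap D (fun m => k + m) q = maxGap (-D) (fun m => -k - m) q := by
  simp [maxGap, gapLengths, Set.mem_neg, add_comm]

theorem natCast_le_maxGap_add {D : Set (ZMod n)} {k : ZMod n} {p q : ℕ} {A B : ℤ}
    (hpq : p + q = n) (hA : A ≤ 0) (hB : p ≤ B)
    (hD : ∀ z ∈ D, ∃ e : ℤ, A ≤ e ∧ e ≤ B ∧ z = k + e) :
    (q : ℤ) ≤ maxGap D (fun m => k - m) q + (B - p - A) := by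
  by_cases hq : (q : ℤ) ≤ B - p - A
  · omega
  have hgap := le_maxGap (D := D) (path := fun m => k - m) (q := q) (i := (-A).toNat)
    (j := q - (B - p).toNat) (by omega) (by omega) fun m hm₁ hm₂ hm => by
      obtain ⟨e, he₁, he₂, he⟩ := hD _ hm
      have h0 : ((e + m : ℤ) : ZMod n) = 0 := by
        push_cast
        linear_combination -he
      have := Int.le_of_dvd (by omega) ((ZMod.intCast_zmod_eq_zero_iff_dvd _ n).1 h0)
      omega
  omega

theorem Joins.min_le {x y : Set (ZMod n)} {k l : ZMod n} {m p₁ p₂ : ℕ}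
    (h : Joins (x, k) (y, l) m) (hp : p₁ + p₂ = n) (hl : (p₁ : ZMod n) = l - k) :
    min (p₁ + 2 * (p₂ - maxGap (x ∆ y) (fun m => k - m) p₂))
      (p₂ + 2 * (p₁ - maxGap (x ∆ y) (fun m => k + m) p₁)) ≤ m := by
  obtain ⟨A, B, T, hA0, hAT, hB0, hBT, hm, rfl, hD⟩ := h.exists_range
  obtain ⟨W, hW⟩ : (n : ℤ) ∣ T - p₁ :=
    (ZMod.intCast_zmod_eq_zero_iff_dvd _ n).1 (by push_cast; rw [hl]; ring)
  rcases (by omega : W = 0 ∨ W = -1 ∨ 1 ≤ W ∨ W ≤ -2) with rfl | rfl | hW | hW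
  · have := natCast_le_maxGap_add (p := p₁) (q := p₂) hp hA0 (by omega) hD
    rw [abs_of_nonneg (by omega)] at hm
    omega
  · have hD' : ∀ z ∈ -(x ∆ y), ∃ e : ℤ, -B ≤ e ∧ e ≤ -A ∧ z = -k + e := fun z hz => by
      obtain ⟨e, he₁, he₂, he⟩ := hD _ hz
      exact ⟨-e, by omega, by omega, by push_cast; linear_combination -he⟩
    have := natCast_le_maxGap_add (p := p₂) (q := p₁) (by omega) (by omega) (by omega) hD'
    rw [← maxGap_add_eq] at this
    rw [abs_of_nonpos (by omega)] at hm
    omega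
  · have : (n : ℤ) ≤ n * W := le_mul_of_one_le_right (by positivity) hW
    rw [abs_of_nonneg (by omega)] at hm
    omega
  · have : (n : ℤ) * W ≤ n * (-2) := mul_le_mul_of_nonneg_left hW (by positivity)
    rw [abs_of_nonpos (by omega)] at hm
    omega

end Lamp

open Lamp in
theorem lampDist_two_sided_estimate_general
    (n : ℕ) (x y : Set (ZMod n)) (k l : ZMod n)
    (p₁ p₂ : ℕ) (hp₁pos : 1 ≤ p₁) (hp₁le : p₁ ≤ n - 1)
    (hp₁ : (p₁ : ZMod n) = l - k) (hp₂ : p₂ = n - p₁)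
    (g₁ g₂ : ℕ)
    (hg₁ : g₁ = sSup {d | ∃ i j : ℕ, i < j ∧ j ≤ p₁ ∧ d = j - i ∧
      ∀ m : ℕ, i < m → m < j → (k + (m : ZMod n)) ∉ x ∆ y})
    (hg₂ : g₂ = sSup {d | ∃ i j : ℕ, i < j ∧ j ≤ p₂ ∧ d = j - i ∧
      ∀ m : ℕ, i < m → m < j → (k - (m : ZMod n)) ∉ x ∆ y}) :
    min (p₁ + 2 * (p₂ - g₂)) (p₂ + 2 * (p₁ - g₁)) ≤ lampDist n (x, k) (y, l) ∧
    lampDist n (x, k) (y, l) ≤ min (p₁ + 2 * (p₂ - g₂)) (p₂ + 2 * (p₁ - g₁)) + 2 := by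
  replace hg₁ : g₁ = maxGap (x ∆ y) (fun m => k + m) p₁ := hg₁
  replace hg₂ : g₂ = maxGap (x ∆ y) (fun m => k - m) p₂ := hg₂
  have hp : p₁ + p₂ = n := by omega
  obtain ⟨i₁, j₁, hij₁, hj₁, hg₁', hgap₁⟩ := exists_maxGap (x ∆ y) (fun m => k + m) hp₁pos
  obtain ⟨i₂, j₂, hij₂, hj₂, hg₂', hgap₂⟩ :=
    exists_maxGap (x ∆ y) (fun m => k - m) (show 1 ≤ p₂ by omega)
  have hJ₁ := Joins.of_gap_up (y := y) hij₁ hj₁ (by omega) hgap₁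
  have hJ₂ := Joins.of_gap_down (y := y) hij₂ hj₂ (by omega) hgap₂
  rw [show k + (p₁ : ZMod n) = l by rw [hp₁]; ring] at hJ₁
  have hsum : (p₁ : ZMod n) + p₂ = 0 := by rw [← Nat.cast_add, hp, ZMod.natCast_self]
  rw [show k - (p₂ : ZMod n) = l by linear_combination hp₁ - hsum] at hJ₂
  refine ⟨le_lampDist ⟨_, hJ₁⟩ fun m hm => hg₁ ▸ hg₂ ▸ hm.min_le hp hp₁, ?_⟩
  have := lampDist_le hJ₁
  have := lampDist_le hJ₂
  omega

/-- Two-sided estimate for the word distance `ρ((x,k),(y,l))` in terms of the lengths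
`p₁, p₂` of the two paths from `k` to `l` on the cycle and the largest gaps `g₁, g₂`
(free of `x △ y`) in these paths. The path `Q₁` is `k, k+1, ..., k+p₁ = l` and the path
`Q₂` is `k, k-1, ..., k-p₂ = l`; gaps are measured as distances `j - i` between indices
`i < j ≤ pᵢ` such that no vertex strictly between them lies in `x △ y`. -/
theorem lampDist_two_sided_estimate
    (n : ℕ) (hn : 2 ≤ n) (x y : Set (ZMod n)) (k l : ZMod n) (hkl : k ≠ l)
    (p₁ p₂ : ℕ) (hp₁pos : 1 ≤ p₁) (hp₁le : p₁ ≤ n - 1)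
    (hp₁ : (p₁ : ZMod n) = l - k) (hp₂ : p₂ = n - p₁)
    (g₁ g₂ : ℕ)
    (hg₁ : g₁ = sSup {d | ∃ i j : ℕ, i < j ∧ j ≤ p₁ ∧ d = j - i ∧
      ∀ m : ℕ, i < m → m < j → (k + (m : ZMod n)) ∉ x ∆ y})
    (hg₂ : g₂ = sSup {d | ∃ i j : ℕ, i < j ∧ j ≤ p₂ ∧ d = j - i ∧
      ∀ m : ℕ, i < m → m < j → (k - (m : ZMod n)) ∉ x ∆ y}) :
    min (p₁ + 2 * (p₂ - g₂)) (p₂ + 2 * (p₁ - g₁)) ≤ lampDist n (x, k) (y, l) ∧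
    lampDist n (x, k) (y, l) ≤ min (p₁ + 2 * (p₂ - g₂)) (p₂ + 2 * (p₁ - g₁)) + 2 :=
  lampDist_two_sided_estimate_general n x y k l p₁ p₂ hp₁pos hp₁le hp₁ hp₂ g₁ g₂ hg₁ hg₂
end

section
/- For every integer n ≥ 2 and all (x,k), (y,l) ∈ G_n = Z_2 ≀ Z_n: ρ((x,k),(y,l)) ≥ τ − 1, where τ is the minimal number of vertices of an arc of Z_n containing the set {k, l} ∪ (x △ y). -/
open scoped symmDiff

/-! Each generator `t^{±1}`, `(ta)^{±1}` moves the lamplighter by one step and toggles at most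
the lamps at its start and end positions. Hence the positions visited by a word of length `m`
form an arc with at most `m + 1` vertices, which contains both endpoints of the walk and every
lamp whose state has changed. -/

section WordMetric

variable {n : ℕ}

def IsLetter (S : Set (Lamp n)) (s : Lamp n) : Prop :=
  s ∈ S ∨ ∃ g ∈ S, s = lampInv g

def WordReach (S : Set (Lamp n)) (u v : Lamp n) : Prop :=
  ∃ w : List (Lamp n), (∀ s ∈ w, IsLetter S s) ∧ v = w.foldl lampMul u

theorem WordReach.refl (S : Set (Lamp n)) (u : Lamp n) : WordReach S u u :=
  ⟨[], by simp, rfl⟩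

theorem WordReach.trans {S : Set (Lamp n)} {u v z : Lamp n} (huv : WordReach S u v)
    (hvz : WordReach S v z) : WordReach S u z := by
  obtain ⟨w₁, hw₁, rfl⟩ := huv
  obtain ⟨w₂, hw₂, rfl⟩ := hvz
  refine ⟨w₁ ++ w₂, fun s hs => ?_, List.foldl_append.symm⟩
  rcases List.mem_append.1 hs with h | h
  exacts [hw₁ s h, hw₂ s h]

theorem le_wordDist {S : Set (Lamp n)} {u v : Lamp n} {c : ℕ} (hreach : WordReach S u v)
    (h : ∀ w : List (Lamp n), (∀ s ∈ w, IsLetter S s) → v = w.foldl lampMul u → c ≤ w.length) :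
    c ≤ wordDist S u v := by
  obtain ⟨w₀, hw₀, hv₀⟩ := hreach
  refine le_csInf ⟨w₀.length, w₀, rfl, hw₀, hv₀⟩ ?_
  rintro b ⟨w, rfl, hw, hv⟩
  exact h w hw hv

end WordMetric

section Lamplighter

variable {n : ℕ}

theorem lampTA_eq : lampTA n = ({1}, 1) := by
  simp [lampTA, lampMul, lampT, lampA]

theorem lampMul_lampT (u : Lamp n) : lampMul u (lampT n) = (u.1, u.2 + 1) := by
  simp [lampMul, lampT]

theorem lampMul_lampInv_lampT (u : Lamp n) : lampMul u (lampInv (lampT n)) = (u.1, u.2 - 1) := by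
  simp [lampMul, lampInv, lampT, sub_eq_add_neg]

theorem lampMul_lampTA (u : Lamp n) : lampMul u (lampTA n) = (u.1 ∆ {u.2 + 1}, u.2 + 1) := by
  simp [lampTA_eq, lampMul]

theorem lampMul_lampInv_lampTA (u : Lamp n) :
    lampMul u (lampInv (lampTA n)) = (u.1 ∆ {u.2}, u.2 - 1) := by
  simp [lampTA_eq, lampMul, lampInv, sub_eq_add_neg]

theorem IsLetter.lampMul {s : Lamp n} (hs : IsLetter {lampT n, lampTA n} s) (u : Lamp n) :
    ((lampMul u s).2 = u.2 + 1 ∨ (lampMul u s).2 = u.2 - 1) ∧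
      u.1 ∆ (lampMul u s).1 ⊆ {u.2, (lampMul u s).2} := by
  rcases hs with (rfl | rfl) | ⟨g, rfl | rfl, rfl⟩
  · simp [lampMul_lampT]
  · simp [lampMul_lampTA, symmDiff_symmDiff_cancel_left]
  · simp [lampMul_lampInv_lampT]
  · simp [lampMul_lampInv_lampTA, symmDiff_symmDiff_cancel_left]

theorem wordReach_move [NeZero n] (x : Set (ZMod n)) (k l : ZMod n) :
    WordReach {lampT n, lampTA n} (x, k) (x, l) := by
  refine ⟨List.replicate (l - k).val (lampT n), fun s hs => ?_, ?_⟩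
  · rw [List.eq_of_mem_replicate hs]
    exact Or.inl (Or.inl rfl)
  · suffices ∀ (j : ℕ) (k : ZMod n),
        (List.replicate j (lampT n)).foldl lampMul (x, k) = (x, k + j) by
      simp [this]
    intro j
    induction j with
    | zero => simp
    | succ j ih =>
      intro k
      rw [List.replicate_succ, List.foldl_cons, lampMul_lampT, ih]
      push_cast
      ring_nf

theorem wordReach_toggle [NeZero n] (x : Set (ZMod n)) (k p : ZMod n) :
    WordReach {lampT n, lampTA n} (x, k) (x ∆ {p}, k) := by
  have hstep : WordReach {lampT n, lampTA n} (x, p - 1) (x ∆ {p}, p) :=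
    ⟨[lampTA n], by simp [IsLetter], by simp [lampMul_lampTA]⟩
  exact ((wordReach_move x k _).trans hstep).trans (wordReach_move _ p k)

theorem wordReach_symmDiff [NeZero n] (k : ZMod n) (d : Set (ZMod n)) :
    ∀ x : Set (ZMod n), WordReach {lampT n, lampTA n} (x, k) (x ∆ d, k) := by
  induction d, d.toFinite using Set.Finite.induction_on with
  | empty =>
    intro x
    rw [← Set.bot_eq_empty, symmDiff_bot]
    exact WordReach.refl _ _
  | @insert p d hp _ ih =>
    intro x
    have hinsert : insert p d = {p} ∆ d := by
      rw [Disjoint.symmDiff_eq_sup (by simpa using hp)]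
      rfl
    rw [hinsert, ← symmDiff_assoc]
    exact (wordReach_toggle x k p).trans (ih _)

theorem wordReach_lamp [NeZero n] (u v : Lamp n) : WordReach {lampT n, lampTA n} u v := by
  obtain ⟨x, k⟩ := u
  obtain ⟨y, l⟩ := v
  have htoggle := wordReach_symmDiff k (x ∆ y) x
  rw [symmDiff_symmDiff_cancel_left] at htoggle
  exact htoggle.trans (wordReach_move y k l)

end Lamplighter

section Arc

variable {n : ℕ}

theorem arcSet_subset_succ (a : ZMod n) (m : ℕ) : arcSet n a m ⊆ arcSet n a (m + 1) := by
  rintro z ⟨i, hi, rfl⟩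
  exact ⟨i, by omega, rfl⟩

theorem arcSet_subset_pred_succ (a : ZMod n) (m : ℕ) :
    arcSet n a m ⊆ arcSet n (a - 1) (m + 1) := by
  rintro z ⟨i, hi, rfl⟩
  exact ⟨i + 1, by omega, by push_cast; ring⟩

theorem exists_arcSet_succ {a z z' : ZMod n} {m : ℕ} (hz : z ∈ arcSet n a m)
    (hz' : z' = z - 1 ∨ z' = z + 1) :
    ∃ a', arcSet n a m ⊆ arcSet n a' (m + 1) ∧ z' ∈ arcSet n a' (m + 1) := by
  obtain ⟨i, hi, rfl⟩ := hz
  rcases hz' with rfl | rfl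
  · exact ⟨a - 1, arcSet_subset_pred_succ a m, i, by omega, by ring⟩
  · exact ⟨a, arcSet_subset_succ a m, i + 1, by omega, by push_cast; ring⟩

theorem arcSet_eq_univ [NeZero n] (a : ZMod n) {m : ℕ} (hm : n - 1 ≤ m) :
    arcSet n a m = Set.univ := by
  refine Set.eq_univ_of_forall fun z => ⟨(z - a).val, ?_, by simp⟩
  have := ZMod.val_lt (z - a)
  omega

theorem exists_arcSet_le [NeZero n] {s : Set (ZMod n)} {a : ZMod n} {m : ℕ}
    (hs : s ⊆ arcSet n a m) : ∃ m' ≤ n - 1, m' ≤ m ∧ s ⊆ arcSet n a m' := by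
  rcases le_total m (n - 1) with hm | hm
  · exact ⟨m, hm, le_rfl, hs⟩
  · exact ⟨n - 1, le_rfl, hm, by simp [arcSet_eq_univ a le_rfl]⟩

theorem exists_arcSet_of_word (w : List (Lamp n)) (hw : ∀ s ∈ w, IsLetter {lampT n, lampTA n} s)
    (u : Lamp n) : ∃ a m, m ≤ w.length ∧
      {u.2, (w.foldl lampMul u).2} ∪ (u.1 ∆ (w.foldl lampMul u).1) ⊆ arcSet n a m := by
  induction w generalizing u with
  | nil => exact ⟨u.2, 0, le_rfl, by simp [arcSet]⟩
  | cons s w ih =>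
    obtain ⟨a, m, hmw, hsub⟩ := ih (fun g hg => hw g (List.mem_cons_of_mem _ hg)) (lampMul u s)
    obtain ⟨hmove, htoggle⟩ := (hw s List.mem_cons_self).lampMul u
    rw [List.foldl_cons]
    generalize lampMul u s = u' at *
    generalize w.foldl lampMul u' = v at *
    obtain ⟨a', harc, hu⟩ := exists_arcSet_succ (z' := u.2) (hsub (Or.inl (Or.inl rfl)))
      (by rcases hmove with h | h <;> [left; right] <;> rw [h] <;> ring)
    refine ⟨a', m + 1, by simpa using hmw, ?_⟩
    have hsub' := hsub.trans harc
    rintro z ((rfl | rfl) | hz)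
    · exact hu
    · exact hsub' (by simp)
    · rcases symmDiff_triangle u.1 u'.1 v.1 hz with h | h
      · rcases htoggle h with rfl | rfl
        exacts [hu, hsub' (by simp)]
      · exact hsub' (Or.inr h)

end Arc

/-- `ρ((x,k),(y,l)) ≥ τ - 1`, where `τ` is the minimal number of vertices of an arc of
`Z_n` containing `{k, l} ∪ (x △ y)`. -/
theorem lampDist_ge_minimal_arc
    (n : ℕ) (hn : 2 ≤ n) (x y : Set (ZMod n)) (k l : ZMod n) (τ : ℕ)
    (hτ : τ = sInf {c | ∃ a : ZMod n, ∃ m ≤ n - 1, c = m + 1 ∧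
      ({k, l} ∪ (x ∆ y)) ⊆ arcSet n a m}) :
    τ - 1 ≤ lampDist n (x, k) (y, l) := by
  have : NeZero n := ⟨by omega⟩
  refine le_wordDist (wordReach_lamp _ _) fun w hw hv => ?_
  obtain ⟨a, m, hmw, hsub⟩ := exists_arcSet_of_word w hw (x, k)
  rw [← hv] at hsub
  obtain ⟨m', hm'n, hm'm, hsub'⟩ := exists_arcSet_le hsub
  have hτm' : τ ≤ m' + 1 := hτ ▸ Nat.sInf_le ⟨a, m', hm'n, rfl, hsub'⟩
  omega
end

section
/- Let n be a positive integer divisible by 6. Then the map φ_{1,n} : P_{1,n} → W_n is a bijection of P_{1,n} onto W_n. -/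
open scoped symmDiff

/-! The inverse of `φ_{1,n}` reads the position off as `|A₁|`, and lamp `z` off `A₁` at index `z`
when `z < |A₁|`, off `A₂` at index `n - 1 - z` otherwise. The bound `|A₁| ≤ 5n/6` in `W_n` keeps
`|A₁| < n`, so the position survives reduction mod `n`. -/

theorem List.getD_map_range {α : Type*} {m i : ℕ} (h : i < m) (f : ℕ → α) (d : α) :
    ((List.range m).map f).getD i d = f i := by
  simp [List.getElem?_range h]

def phi1Inv (n : ℕ) (p : List Bool × List Bool) : Lamp n :=
  ({z | if z.val < p.1.length then p.1.getD z.val false else p.2.getD (n - 1 - z.val) false},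
    p.1.length)

section

variable {n : ℕ}

theorem phi1_fst_length (u : Lamp n) : (phi1 n u).1.length = u.2.val := by
  simp [phi1]

theorem phi1_snd_length (u : Lamp n) : (phi1 n u).2.length = n - u.2.val := by
  simp [phi1]

theorem phi1Inv_phi1 [NeZero n] (u : Lamp n) : phi1Inv n (phi1 n u) = u := by
  refine Prod.ext (Set.ext fun z => ?_) (by simp [phi1Inv, phi1_fst_length])
  have hz := ZMod.val_lt z
  have hk := ZMod.val_lt u.2
  simp only [phi1Inv, phi1_fst_length, Set.mem_ofPred_eq]
  split_ifs with hzk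
  · rw [phi1, List.getD_map_range hzk]
    simp
  · have hidx : n - 1 - (n - 1 - z.val) = z.val := by omega
    rw [phi1, List.getD_map_range (by omega : n - 1 - z.val < n - u.2.val), hidx]
    simp

theorem phi1_phi1Inv (p : List Bool × List Bool) (hsum : p.1.length + p.2.length = n)
    (hlt : p.1.length < n) : phi1 n (phi1Inv n p) = p := by
  have hk : ((p.1.length : ℕ) : ZMod n).val = p.1.length := ZMod.val_cast_of_lt hlt
  refine Prod.ext (List.ext_getElem ?_ fun j hj _ => ?_) (List.ext_getElem ?_ fun i hi _ => ?_)
  · simp [phi1, phi1Inv, hk]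
  · have hj : j < p.1.length := by simpa [phi1, phi1Inv, hk] using hj
    have hval : ((j : ℕ) : ZMod n).val = j := ZMod.val_cast_of_lt (hj.trans hlt)
    simp only [phi1, phi1Inv, List.getElem_map, List.getElem_range, Set.mem_ofPred_eq, hval,
      hk, if_pos hj, List.getD_eq_getElem _ _ hj]
    simp
  · simp [phi1, phi1Inv, hk]
    omega
  · have hi : i < p.2.length := by simp [phi1, phi1Inv, hk] at hi; omega
    have hval : ((n - 1 - i : ℕ) : ZMod n).val = n - 1 - i := ZMod.val_cast_of_lt (by omega)
    have hidx : n - 1 - (n - 1 - i) = i := by omega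
    simp only [phi1, phi1Inv, List.getElem_map, List.getElem_range, Set.mem_ofPred_eq, hval,
      hk, if_neg (by omega : ¬ n - 1 - i < p.1.length), hidx, List.getD_eq_getElem _ _ hi]
    simp

theorem fst_length_lt_of_mem_Wset (hn : 0 < n) {p : List Bool × List Bool} (hp : p ∈ Wset n) :
    p.1.length < n := by
  have := hp.2.2
  omega

theorem phi1_mapsTo [NeZero n] : Set.MapsTo (phi1 n) (lampP1 n) (Wset n) := by
  rintro u ⟨hlo, hhi⟩
  have := ZMod.val_lt u.2
  exact ⟨by rw [phi1_fst_length, phi1_snd_length]; omega,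
    by rwa [phi1_fst_length], by rwa [phi1_fst_length]⟩

theorem phi1Inv_mapsTo (hn : 0 < n) : Set.MapsTo (phi1Inv n) (Wset n) (lampP1 n) := by
  intro p hp
  have hk : ((p.1.length : ℕ) : ZMod n).val = p.1.length :=
    ZMod.val_cast_of_lt (fst_length_lt_of_mem_Wset hn hp)
  exact ⟨by simpa [phi1Inv, hk] using hp.2.1, by simpa [phi1Inv, hk] using hp.2.2⟩

end

theorem phi1_bijOn_general (n : ℕ) (hn : 0 < n) :
    Set.BijOn (phi1 n) (lampP1 n) (Wset n) := by
  have : NeZero n := ⟨hn.ne'⟩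
  refine Set.InvOn.bijOn ⟨fun u _ => phi1Inv_phi1 u, fun p hp => ?_⟩ phi1_mapsTo
    (phi1Inv_mapsTo hn)
  exact phi1_phi1Inv p hp.1 (fst_length_lt_of_mem_Wset hn hp)

/-- For `n` divisible by 6, the map `φ_{1,n}` is a bijection of `P_{1,n}` onto `W_n`. -/
theorem phi1_bijOn (n : ℕ) (hn : 0 < n) (h6 : 6 ∣ n) :
    Set.BijOn (phi1 n) (lampP1 n) (Wset n) :=
  phi1_bijOn_general n hn
end

section
/- Let n be a positive integer divisible by 6, let (x,k), (y,l) ∈ P_{1,n}, and set (A₁,A₂) = φ_{1,n}(x,k), (B₁,B₂) = φ_{1,n}(y,l). Let D = (x △ y) ∪ {k, l}, regarded as a nonempty subset of {0, 1, ..., n−1}. Then lgc(A₁,B₁) = min D, and lgc(A₂,B₂) = n − 1 − max D if max D ∈ x △ y, while lgc(A₂,B₂) = n − max D if max D ∉ x △ y. -/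
open scoped symmDiff

/-
The prefix `A₁` records the lamps at `0, …, k-1` and `A₂` those at `n-1, n-2, …, k`, read from
the far end. Two such words agree up to the first position where the lamps differ or one of the
words runs out, so `lgc(A₁,B₁)` is the first point of `D`. Reading from `n-1` downwards, `A₂` and
`B₂` agree until the last point `max D` of `D`: they split there if the lamps differ at `max D`,
and otherwise one of them ends exactly there, since then `max D = max(k,l)`.
-/

theorem lgc_eq_of_getElem? {A B : List Bool} {m : ℕ} (hA : m ≤ A.length) (hB : m ≤ B.length)
    (hagree : ∀ i < m, A[i]? = B[i]?) (hstop : m = A.length ∨ m = B.length ∨ A[m]? ≠ B[m]?) :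
    lgc A B = m := by
  induction A generalizing B m with
  | nil => simp_all [lgc]
  | cons a as ih =>
    cases B with
    | nil => simp_all [lgc]
    | cons b bs =>
      cases m with
      | zero =>
        have hab : a ≠ b := by simpa using hstop
        simp [lgc, hab]
      | succ m =>
        have hab : a = b := by simpa using hagree 0 m.succ_pos
        rw [lgc, if_pos hab, ih (by simpa using hA) (by simpa using hB)
          (fun i hi => by simpa using hagree (i + 1) (by omega)) (by simpa using hstop)]

theorem lgc_map_range {a b m : ℕ} {f g : ℕ → Bool} (ha : m ≤ a) (hb : m ≤ b)
    (hagree : ∀ i < m, f i = g i) (hstop : m = a ∨ m = b ∨ f m ≠ g m) :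
    lgc ((List.range a).map f) ((List.range b).map g) = m := by
  refine lgc_eq_of_getElem? (by simpa using ha) (by simpa using hb) (fun i hi => ?_) ?_
  · simp [List.getElem?_range (show i < a by omega), List.getElem?_range (show i < b by omega),
      hagree i hi]
  · by_cases hend : m = a ∨ m = b
    · rcases hend with rfl | rfl <;> simp
    · have hne : f m ≠ g m := by tauto
      right; right
      simp [List.getElem?_range (show m < a by omega), List.getElem?_range (show m < b by omega),
        hne]

section differenceSet

variable {N a b : ℕ} {p q : ℕ → Bool}

/-- The set `D` of the theorem, with the lamps read as `p`, `q : ℕ → Bool` and the cursors as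
`a`, `b`. -/
def differenceSet (N a b : ℕ) (p q : ℕ → Bool) : Set ℕ :=
  {m | m < N ∧ (p m ≠ q m ∨ m = a ∨ m = b)}

theorem left_mem_differenceSet (ha : a < N) : a ∈ differenceSet N a b p q :=
  ⟨ha, by tauto⟩

theorem right_mem_differenceSet (hb : b < N) : b ∈ differenceSet N a b p q :=
  ⟨hb, by tauto⟩

theorem nonempty_differenceSet (ha : a < N) : (differenceSet N a b p q).Nonempty :=
  ⟨a, left_mem_differenceSet ha⟩

theorem bddAbove_differenceSet : BddAbove (differenceSet N a b p q) :=
  ⟨N, fun _ hm => hm.1.le⟩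

theorem eq_of_notMem_differenceSet {m : ℕ} (hm : m < N) (h : m ∉ differenceSet N a b p q) :
    p m = q m := by
  by_contra hne
  exact h ⟨hm, Or.inl hne⟩

theorem lgc_map_range_eq_sInf_differenceSet (ha : a < N) (hb : b < N) :
    lgc ((List.range a).map p) ((List.range b).map q) = sInf (differenceSet N a b p q) := by
  have hmem : sInf (differenceSet N a b p q) ∈ differenceSet N a b p q :=
    Nat.sInf_mem (nonempty_differenceSet ha)
  refine lgc_map_range (Nat.sInf_le (left_mem_differenceSet ha))
    (Nat.sInf_le (right_mem_differenceSet hb)) (fun i hi => ?_) ?_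
  · exact eq_of_notMem_differenceSet (hi.trans hmem.1) (Nat.notMem_of_lt_sInf hi)
  · exact hmem.2.rotate

theorem lgc_map_range_rev_of_ne (ha : a < N) (hb : b < N)
    (hne : p (sSup (differenceSet N a b p q)) ≠ q (sSup (differenceSet N a b p q))) :
    lgc ((List.range (N - a)).map fun i => p (N - 1 - i))
      ((List.range (N - b)).map fun i => q (N - 1 - i)) =
      N - 1 - sSup (differenceSet N a b p q) := by
  set s := sSup (differenceSet N a b p q)
  have hsN : s < N := (Nat.sSup_mem (nonempty_differenceSet ha) bddAbove_differenceSet).1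
  have has : a ≤ s := le_csSup bddAbove_differenceSet (left_mem_differenceSet ha)
  have hbs : b ≤ s := le_csSup bddAbove_differenceSet (right_mem_differenceSet hb)
  refine lgc_map_range (by omega) (by omega) (fun i hi => ?_) (Or.inr (Or.inr ?_))
  · exact eq_of_notMem_differenceSet (by omega)
      (notMem_of_csSup_lt (show s < N - 1 - i by omega) bddAbove_differenceSet)
  · rwa [show N - 1 - (N - 1 - s) = s by omega]

theorem lgc_map_range_rev_of_eq (ha : a < N) (hb : b < N)
    (heq : p (sSup (differenceSet N a b p q)) = q (sSup (differenceSet N a b p q))) :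
    lgc ((List.range (N - a)).map fun i => p (N - 1 - i))
      ((List.range (N - b)).map fun i => q (N - 1 - i)) =
      N - sSup (differenceSet N a b p q) := by
  set s := sSup (differenceSet N a b p q)
  have hmem : s ∈ differenceSet N a b p q :=
    Nat.sSup_mem (nonempty_differenceSet ha) bddAbove_differenceSet
  have has : a ≤ s := le_csSup bddAbove_differenceSet (left_mem_differenceSet ha)
  have hbs : b ≤ s := le_csSup bddAbove_differenceSet (right_mem_differenceSet hb)
  have hcursor : s = a ∨ s = b := hmem.2.resolve_left fun hne => hne heq
  refine lgc_map_range (by omega) (by omega) (fun i hi => ?_) (by omega)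
  rcases (show N - 1 - i = s ∨ s < N - 1 - i by omega) with hi' | hi'
  · rwa [hi']
  · exact eq_of_notMem_differenceSet (by omega) (notMem_of_csSup_lt hi' bddAbove_differenceSet)

end differenceSet

theorem ZMod.natCast_eq_iff_eq_val {n m : ℕ} (hm : m < n) {k : ZMod n} :
    (m : ZMod n) = k ↔ m = k.val := by
  have : NeZero n := ⟨by omega⟩
  rw [← (ZMod.val_injective n).eq_iff, ZMod.val_cast_of_lt hm]

section lamps

variable {n : ℕ}

open Classical in
noncomputable def litAt (x : Set (ZMod n)) (j : ℕ) : Bool :=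
  if (j : ZMod n) ∈ x then true else false

theorem phi1_eq (x : Set (ZMod n)) (k : ZMod n) :
    phi1 n (x, k) = ((List.range k.val).map (litAt x),
      (List.range (n - k.val)).map fun i => litAt x (n - 1 - i)) :=
  rfl

theorem litAt_ne_litAt_iff {x y : Set (ZMod n)} {j : ℕ} :
    litAt x j ≠ litAt y j ↔ (j : ZMod n) ∈ x ∆ y := by
  by_cases hx : (j : ZMod n) ∈ x <;> by_cases hy : (j : ZMod n) ∈ y <;>
    simp [litAt, Set.mem_symmDiff, hx, hy]

theorem setOf_eq_differenceSet [NeZero n] (x y : Set (ZMod n)) (k l : ZMod n) :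
    {m : ℕ | m < n ∧ ((m : ZMod n) ∈ x ∆ y ∨ (m : ZMod n) = k ∨ (m : ZMod n) = l)} =
      differenceSet n k.val l.val (litAt x) (litAt y) := by
  ext m
  refine and_congr_right fun hm => ?_
  rw [litAt_ne_litAt_iff, ZMod.natCast_eq_iff_eq_val hm, ZMod.natCast_eq_iff_eq_val hm]

end lamps

theorem lgc_of_phi1_general
    (n : ℕ) (hn : 0 < n)
    (x y : Set (ZMod n)) (k l : ZMod n)
    (D : Set ℕ)
    (hD : D = {m | m < n ∧ (((m : ℕ) : ZMod n) ∈ x ∆ y ∨ ((m : ℕ) : ZMod n) = k ∨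
      ((m : ℕ) : ZMod n) = l)}) :
    lgc (phi1 n (x, k)).1 (phi1 n (y, l)).1 = sInf D ∧
    (((sSup D : ℕ) : ZMod n) ∈ x ∆ y →
      lgc (phi1 n (x, k)).2 (phi1 n (y, l)).2 = n - 1 - sSup D) ∧
    (((sSup D : ℕ) : ZMod n) ∉ x ∆ y →
      lgc (phi1 n (x, k)).2 (phi1 n (y, l)).2 = n - sSup D) := by
  have : NeZero n := ⟨hn.ne'⟩
  have hk : k.val < n := k.val_lt
  have hl : l.val < n := l.val_lt
  rw [hD, setOf_eq_differenceSet, phi1_eq, phi1_eq, ← litAt_ne_litAt_iff]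
  exact ⟨lgc_map_range_eq_sInf_differenceSet hk hl, lgc_map_range_rev_of_ne hk hl,
    fun h => lgc_map_range_rev_of_eq hk hl (not_not.mp h)⟩

/-- For `(x,k), (y,l) ∈ P_{1,n}` with images `(A₁,A₂) = φ_{1,n}(x,k)`,
`(B₁,B₂) = φ_{1,n}(y,l)`, and `D = (x △ y) ∪ {k,l}` regarded as a subset of
`{0,...,n-1}`: `lgc(A₁,B₁) = min D`, and `lgc(A₂,B₂) = n - 1 - max D` if
`max D ∈ x △ y`, while `lgc(A₂,B₂) = n - max D` if `max D ∉ x △ y`. -/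
theorem lgc_of_phi1
    (n : ℕ) (hn : 0 < n) (h6 : 6 ∣ n)
    (x y : Set (ZMod n)) (k l : ZMod n)
    (hxk : ((x, k) : Lamp n) ∈ lampP1 n) (hyl : ((y, l) : Lamp n) ∈ lampP1 n)
    (D : Set ℕ)
    (hD : D = {m | m < n ∧ (((m : ℕ) : ZMod n) ∈ x ∆ y ∨ ((m : ℕ) : ZMod n) = k ∨
      ((m : ℕ) : ZMod n) = l)}) :
    lgc (phi1 n (x, k)).1 (phi1 n (y, l)).1 = sInf D ∧
    (((sSup D : ℕ) : ZMod n) ∈ x ∆ y →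
      lgc (phi1 n (x, k)).2 (phi1 n (y, l)).2 = n - 1 - sSup D) ∧
    (((sSup D : ℕ) : ZMod n) ∉ x ∆ y →
      lgc (phi1 n (x, k)).2 (phi1 n (y, l)).2 = n - sSup D) :=
  lgc_of_phi1_general n hn x y k l D hD
end

section
/- Let n be a positive integer divisible by 6. For all (x,k), (y,l) ∈ P_{1,n}: (1/6)·d_∞(φ_{1,n}(x,k), φ_{1,n}(y,l)) − 2 ≤ ρ((x,k),(y,l)) ≤ 2·d_∞(φ_{1,n}(x,k), φ_{1,n}(y,l)) + 2. Consequently, the bijections φ_{1,n} : (P_{1,n}, ρ) → (W_n, d_∞) have distortions bounded by a constant independent of n. -/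
/-!
Let `p` and `q` be the lengths of the common prefixes of the two tree coordinates of `φ(x,k)` and
`φ(y,l)`; then `x` and `y` differ only at lamps in `[p, n - 1 - q]`, and
`d_∞ = max (k + l - 2p) (2n - k - l - 2q)`. A lamplighter that walks to the far end of this window,
sweeps back to `p` switching the differing lamps and then walks to `l` spends at most
`2 d_∞ + 2` steps.

Conversely, one generator moves `φ` by at most `3` in `d_∞`, except when the lamplighter crosses
the edge `{n - 1, 0}` of the cycle, where `φ` jumps. Capping `d_∞` by three times the number of
steps needed to reach that edge from both ends gives a pseudometric that still grows by at most
`3` per generator, and on `P_{1,n}` the cap is at least `n - 3`, while `d_∞ ≤ 2n`.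
-/

open scoped symmDiff

theorem le_lgc_iff : ∀ {A B : List Bool} {c : ℕ},
    c ≤ lgc A B ↔ c ≤ A.length ∧ c ≤ B.length ∧ ∀ j < c, A[j]? = B[j]?
  | _, _, 0 => by simp
  | [], _, c + 1 => by simp [lgc]
  | _ :: _, [], c + 1 => by simp [lgc]
  | a :: A, b :: B, c + 1 => by
    rw [lgc, Nat.forall_lt_succ_left]
    split_ifs with hab
    · subst hab
      simp [le_lgc_iff (A := A) (B := B)]
    · simpa using fun _ _ h => absurd h hab

theorem lgc_le_left (A B : List Bool) : lgc A B ≤ A.length := (le_lgc_iff.1 le_rfl).1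

theorem lgc_le_right (A B : List Bool) : lgc A B ≤ B.length := (le_lgc_iff.1 le_rfl).2.1

theorem lgc_comm (A B : List Bool) : lgc A B = lgc B A := by
  have key {A B : List Bool} : lgc A B ≤ lgc B A := by
    obtain ⟨hA, hB, h⟩ := le_lgc_iff.1 (le_refl (lgc A B))
    exact le_lgc_iff.2 ⟨hB, hA, fun j hj => (h j hj).symm⟩
  exact le_antisymm key key

theorem lgc_self (A : List Bool) : lgc A A = A.length :=
  le_antisymm (lgc_le_left A A) (le_lgc_iff.2 ⟨le_rfl, le_rfl, fun _ _ => rfl⟩)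

theorem min_lgc_le_lgc (A B C : List Bool) : min (lgc A B) (lgc B C) ≤ lgc A C := by
  obtain ⟨hA, -, hAB⟩ := le_lgc_iff.1 (min_le_left (lgc A B) (lgc B C))
  obtain ⟨-, hC, hBC⟩ := le_lgc_iff.1 (min_le_right (lgc A B) (lgc B C))
  exact le_lgc_iff.2 ⟨hA, hC, fun j hj => (hAB j hj).trans (hBC j hj)⟩

theorem treeDist_self (A : List Bool) : treeDist A A = 0 := by
  rw [treeDist, lgc_self]; omega

theorem treeDist_comm (A B : List Bool) : treeDist A B = treeDist B A := by
  rw [treeDist, treeDist, lgc_comm, Nat.add_comm]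

theorem treeDist_triangle (A B C : List Bool) :
    treeDist A C ≤ treeDist A B + treeDist B C := by
  have := min_lgc_le_lgc A B C
  have := lgc_le_left A B
  have := lgc_le_right A B
  have := lgc_le_left B C
  have := lgc_le_right B C
  unfold treeDist
  omega

section LampGroup

variable {n : ℕ}

theorem lampInv_lampInv (u : Lamp n) : lampInv (lampInv u) = u := by
  obtain ⟨x, k⟩ := u
  simp only [lampInv, Set.image_image, sub_neg_eq_add, sub_add_cancel, Set.image_id', neg_neg]

theorem lampMul_lampMul_lampInv (u s : Lamp n) : lampMul (lampMul u s) (lampInv s) = u := by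
  obtain ⟨x, k⟩ := u
  obtain ⟨y, g⟩ := s
  have : (fun z => k + g + (z - g)) = (k + ·) := by funext z; ring
  simp only [lampMul, lampInv, Set.image_image, this, symmDiff_symmDiff_cancel_right,
    add_neg_cancel_right]

theorem lampMul_lampT_s13 (x : Set (ZMod n)) (k : ZMod n) :
    lampMul (x, k) (lampT n) = (x, k + 1) := by
  simp [lampMul, lampT]

theorem lampMul_lampTA_s13 (x : Set (ZMod n)) (k : ZMod n) :
    lampMul (x, k) (lampTA n) = (x ∆ {k + 1}, k + 1) := by
  simp [lampTA, lampMul, lampT, lampA]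

def lampGens (n : ℕ) : Set (Lamp n) :=
  {s | s ∈ ({lampT n, lampTA n} : Set (Lamp n)) ∨
    ∃ g ∈ ({lampT n, lampTA n} : Set (Lamp n)), s = lampInv g}

theorem lampInv_mem_lampGens {s : Lamp n} (hs : s ∈ lampGens n) : lampInv s ∈ lampGens n := by
  rcases hs with hs | ⟨g, hg, rfl⟩
  · exact Or.inr ⟨s, hs, rfl⟩
  · exact Or.inl ((lampInv_lampInv g).symm ▸ hg)

def Reaches (u v : Lamp n) (m : ℕ) : Prop :=
  ∃ w : List (Lamp n), w.length ≤ m ∧ (∀ s ∈ w, s ∈ lampGens n) ∧ v = w.foldl lampMul u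

namespace Reaches

theorem refl (u : Lamp n) : Reaches u u 0 := ⟨[], le_rfl, by simp, rfl⟩

theorem single {s : Lamp n} (hs : s ∈ lampGens n) (u : Lamp n) : Reaches u (lampMul u s) 1 :=
  ⟨[s], le_rfl, by simpa using hs, rfl⟩

theorem mono {u v : Lamp n} {m m' : ℕ} (h : Reaches u v m) (hm : m ≤ m') : Reaches u v m' :=
  let ⟨w, hw, hs, hv⟩ := h
  ⟨w, hw.trans hm, hs, hv⟩

theorem trans {u v w : Lamp n} {m m' : ℕ} (h : Reaches u v m) (h' : Reaches v w m') :
    Reaches u w (m + m') := by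
  obtain ⟨w₁, hw₁, hs₁, rfl⟩ := h
  obtain ⟨w₂, hw₂, hs₂, rfl⟩ := h'
  refine ⟨w₁ ++ w₂, by simp; omega, fun s hs => ?_, (List.foldl_append ..).symm⟩
  rcases List.mem_append.1 hs with hs | hs
  exacts [hs₁ s hs, hs₂ s hs]

theorem symm {u v : Lamp n} {m : ℕ} (h : Reaches u v m) : Reaches v u m := by
  obtain ⟨w, hw, hs, rfl⟩ := h
  refine mono ?_ hw
  clear hw
  induction w generalizing u with
  | nil => exact refl u
  | cons s w ih =>
    have hback := single (lampInv_mem_lampGens (hs s List.mem_cons_self)) (lampMul u s)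
    rw [lampMul_lampMul_lampInv] at hback
    exact (ih (fun s' hs' => hs s' (List.mem_cons_of_mem s hs'))).trans hback

end Reaches

theorem lampDist_le_of_reaches {u v : Lamp n} {m : ℕ} (h : Reaches u v m) :
    lampDist n u v ≤ m := by
  obtain ⟨w, hw, hs, hv⟩ := h
  unfold lampDist wordDist
  exact le_trans (Nat.sInf_le (show w.length ∈ _ from ⟨w, rfl, hs, hv⟩)) hw

theorem Reaches.reaches_lampDist {u v : Lamp n} {m : ℕ} (h : Reaches u v m) :
    Reaches u v (lampDist n u v) := by
  obtain ⟨w, -, hs, hv⟩ := h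
  unfold lampDist wordDist
  have hne : Set.Nonempty {m | ∃ w : List (Lamp n), w.length = m ∧
      (∀ s ∈ w, s ∈ lampGens n) ∧ v = w.foldl lampMul u} := ⟨w.length, w, rfl, hs, hv⟩
  obtain ⟨w', hw', hs', hv'⟩ := Nat.sInf_mem hne
  exact ⟨w', hw'.le, hs', hv'⟩

theorem le_mul_of_reaches (D : Lamp n → Lamp n → ℕ) (c : ℕ) (hself : ∀ u, D u u = 0)
    (hcomm : ∀ u v, D u v = D v u) (htri : ∀ u v w, D u w ≤ D u v + D v w)
    (hstep : ∀ u, ∀ s ∈ ({lampT n, lampTA n} : Set (Lamp n)), D u (lampMul u s) ≤ c)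
    {u v : Lamp n} {m : ℕ} (h : Reaches u v m) : D u v ≤ c * m := by
  have hgen (u : Lamp n) (s : Lamp n) (hs : s ∈ lampGens n) : D u (lampMul u s) ≤ c := by
    rcases hs with hs | ⟨g, hg, rfl⟩
    · exact hstep u s hs
    · have hback : lampMul (lampMul u (lampInv g)) g = u := by
        simpa only [lampInv_lampInv] using lampMul_lampMul_lampInv u (lampInv g)
      have := hstep (lampMul u (lampInv g)) g hg
      rwa [hback, hcomm] at this
  obtain ⟨w, hw, hs, rfl⟩ := h
  refine le_trans ?_ (Nat.mul_le_mul_left c hw)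
  clear hw
  induction w generalizing u with
  | nil => simp [hself]
  | cons s w ih =>
    have := ih (u := lampMul u s) (fun s' hs' => hs s' (List.mem_cons_of_mem s hs'))
    have := hgen u s (hs s List.mem_cons_self)
    have := htri u (lampMul u s) ((s :: w).foldl lampMul u)
    simp only [List.foldl_cons, List.length_cons] at *
    rw [Nat.mul_succ]
    omega

end LampGroup

theorem sep_symmDiff_sep_eq_self {α : Type*} {S : Set α} {P Q : α → Prop}
    (h : ∀ z ∈ S, Xor (P z) (Q z)) : {z ∈ S | P z} ∆ {z ∈ S | Q z} = S := by
  ext z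
  by_cases hz : z ∈ S
  · have := h z hz
    simp only [Set.mem_symmDiff, Set.mem_sep_iff, hz, true_and, iff_true]
    exact this
  · simp [Set.mem_symmDiff, hz]

@[simp]
theorem Set.symmDiff_empty {α : Type*} (s : Set α) : s ∆ ∅ = s := symmDiff_bot s

section Sweeps

variable {n : ℕ}

theorem reaches_succ (x T : Set (ZMod n)) (k : ZMod n) (hT : T ⊆ {k + 1}) :
    Reaches (x, k) (x ∆ T, k + 1) 1 := by
  rcases Set.subset_singleton_iff_eq.1 hT with rfl | rfl
  · simpa [lampMul_lampT_s13] using Reaches.single (s := lampT n) (Or.inl (by simp)) (x, k)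
  · simpa [lampMul_lampTA_s13] using Reaches.single (s := lampTA n) (Or.inl (by simp)) (x, k)

theorem reaches_toggle (x T : Set (ZMod n)) (k : ZMod n) (hT : T ⊆ {k}) :
    Reaches (x, k) (x ∆ T, k) 2 := by
  have hdown : Reaches (x, k) (x, k - 1) 1 := by
    simpa using (reaches_succ x ∅ (k - 1) (Set.empty_subset _)).symm
  simpa using hdown.trans (reaches_succ x T (k - 1) (by simpa using hT))

variable [NeZero n]

theorem reaches_sweep_up {a b : ℕ} (hab : a ≤ b) (hb : b < n) (x T : Set (ZMod n))
    (hT : ∀ z ∈ T, a < z.val ∧ z.val ≤ b) :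
    Reaches (x, (a : ZMod n)) (x ∆ T, (b : ZMod n)) (b - a) := by
  induction b, hab using Nat.le_induction generalizing T with
  | base =>
    have : T = ∅ := Set.eq_empty_of_forall_notMem fun z hz => by have := hT z hz; omega
    simpa [this] using Reaches.refl _
  | succ b hab ih =>
    have hlow := ih (by omega) {z ∈ T | z.val ≤ b} fun z hz => ⟨(hT z hz.1).1, hz.2⟩
    have htop : {z ∈ T | z.val = b + 1} ⊆ {(b : ZMod n) + 1} := fun z hz => by
      rw [Set.mem_singleton_iff, ← ZMod.natCast_zmod_val z, hz.2, Nat.cast_succ]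
    have hsplit : {z ∈ T | z.val ≤ b} ∆ {z ∈ T | z.val = b + 1} = T :=
      sep_symmDiff_sep_eq_self fun z hz => by have := hT z hz; simp only [Xor]; omega
    have := hlow.trans (reaches_succ _ _ _ htop)
    rwa [symmDiff_assoc, hsplit, ← Nat.cast_succ, show b - a + 1 = b + 1 - a by omega] at this

theorem reaches_sweep_down {a b : ℕ} (hab : a ≤ b) (hb : b < n) (x T : Set (ZMod n))
    (hT : ∀ z ∈ T, a < z.val ∧ z.val ≤ b) :
    Reaches (x, (b : ZMod n)) (x ∆ T, (a : ZMod n)) (b - a) := by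
  simpa using (reaches_sweep_up hab hb (x ∆ T) T hT).symm

end Sweeps

section PhiDist

variable {n : ℕ}

noncomputable def phiDist (n : ℕ) (u v : Lamp n) : ℕ :=
  max (treeDist (phi1 n u).1 (phi1 n v).1) (treeDist (phi1 n u).2 (phi1 n v).2)

theorem phiDist_self (u : Lamp n) : phiDist n u u = 0 := by
  simp [phiDist, treeDist_self]

theorem phiDist_comm (u v : Lamp n) : phiDist n u v = phiDist n v u := by
  rw [phiDist, phiDist, treeDist_comm, treeDist_comm (phi1 n u).2]

theorem phiDist_triangle (u v w : Lamp n) : phiDist n u w ≤ phiDist n u v + phiDist n v w := by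
  have := treeDist_triangle (phi1 n u).1 (phi1 n v).1 (phi1 n w).1
  have := treeDist_triangle (phi1 n u).2 (phi1 n v).2 (phi1 n w).2
  unfold phiDist
  omega

@[simp]
theorem length_phi1_fst (x : Set (ZMod n)) (k : ZMod n) : (phi1 n (x, k)).1.length = k.val := by
  simp [phi1]

@[simp]
theorem length_phi1_snd (x : Set (ZMod n)) (k : ZMod n) :
    (phi1 n (x, k)).2.length = n - k.val := by
  simp [phi1]

theorem le_lgc_phi1_fst {x y : Set (ZMod n)} {k l : ZMod n} {c : ℕ} :
    c ≤ lgc (phi1 n (x, k)).1 (phi1 n (y, l)).1 ↔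
      c ≤ k.val ∧ c ≤ l.val ∧ ∀ j < c, ((j : ZMod n) ∈ x ↔ (j : ZMod n) ∈ y) := by
  rw [le_lgc_iff, length_phi1_fst, length_phi1_fst]
  refine and_congr_right fun hk => and_congr_right fun hl => forall₂_congr fun j hj => ?_
  simp [phi1, List.getElem?_range (show j < k.val by omega),
    List.getElem?_range (show j < l.val by omega)]

theorem le_lgc_phi1_snd {x y : Set (ZMod n)} {k l : ZMod n} {c : ℕ} :
    c ≤ lgc (phi1 n (x, k)).2 (phi1 n (y, l)).2 ↔
      c ≤ n - k.val ∧ c ≤ n - l.val ∧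
        ∀ i < c, (((n - 1 - i : ℕ) : ZMod n) ∈ x ↔ ((n - 1 - i : ℕ) : ZMod n) ∈ y) := by
  rw [le_lgc_iff, length_phi1_snd, length_phi1_snd]
  refine and_congr_right fun hk => and_congr_right fun hl => forall₂_congr fun i hi => ?_
  simp [phi1, List.getElem?_range (show i < n - k.val by omega),
    List.getElem?_range (show i < n - l.val by omega)]

theorem ZMod.val_add_one_of_lt [NeZero n] {k : ZMod n} (hk : k.val + 1 < n) :
    (k + 1).val = k.val + 1 := by
  rw [← ZMod.val_cast_of_lt hk, Nat.cast_succ, ZMod.natCast_zmod_val]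

theorem phiDist_succ_le [NeZero n] {x T : Set (ZMod n)} {k : ZMod n} (hk : k.val + 1 < n)
    (hT : T ⊆ {k + 1}) : phiDist n (x, k) (x ∆ T, k + 1) ≤ 3 := by
  have hval := ZMod.val_add_one_of_lt hk
  have hoff : ∀ j < n, j ≠ k.val + 1 → ((j : ZMod n) ∈ x ↔ (j : ZMod n) ∈ x ∆ T) := by
    intro j hj hne
    have hjT : (j : ZMod n) ∉ T := fun h => hne <| by
      rw [← hval, ← Set.mem_singleton_iff.1 (hT h), ZMod.val_cast_of_lt hj]
    simp [Set.mem_symmDiff, hjT]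
  have h₁ : k.val ≤ lgc (phi1 n (x, k)).1 (phi1 n (x ∆ T, k + 1)).1 :=
    le_lgc_phi1_fst.2 ⟨le_rfl, by omega, fun j hj => hoff j (by omega) (by omega)⟩
  have h₂ : n - k.val - 2 ≤ lgc (phi1 n (x, k)).2 (phi1 n (x ∆ T, k + 1)).2 :=
    le_lgc_phi1_snd.2 ⟨by omega, by omega, fun i hi => hoff _ (by omega) (by omega)⟩
  unfold phiDist treeDist
  simp only [length_phi1_fst, length_phi1_snd, hval]
  omega

theorem lgc_phi1_le_val_of_mem_symmDiff [NeZero n] {x y : Set (ZMod n)} {k l z : ZMod n}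
    (hz : z ∈ x ∆ y) :
    lgc (phi1 n (x, k)).1 (phi1 n (y, l)).1 ≤ z.val ∧
      z.val + lgc (phi1 n (x, k)).2 (phi1 n (y, l)).2 < n := by
  have hxy : ¬(z ∈ x ↔ z ∈ y) := by rw [Set.mem_symmDiff] at hz; tauto
  have hz_lt := ZMod.val_lt z
  constructor
  · by_contra! hlt
    obtain ⟨-, -, hagree⟩ := le_lgc_phi1_fst.1 (le_refl (lgc (phi1 n (x, k)).1 (phi1 n (y, l)).1))
    exact hxy (by simpa using hagree z.val hlt)
  · by_contra! hle
    obtain ⟨-, -, hagree⟩ := le_lgc_phi1_snd.1 (le_refl (lgc (phi1 n (x, k)).2 (phi1 n (y, l)).2))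
    have := hagree (n - 1 - z.val) (by omega)
    rw [show n - 1 - (n - 1 - z.val) = z.val by omega, ZMod.natCast_zmod_val] at this
    exact hxy this

end PhiDist

section UpperBound

variable {n : ℕ} [NeZero n]

/-- The word: right to `r = max k (n - 1 - q)`, left down to `p` switching the differing lamps in
`(p, r]`, switch lamp `p` by a detour through `p - 1`, right to `l`. -/
theorem reaches_of_val_le {x y : Set (ZMod n)} {k l : ZMod n} (hlk : l.val ≤ k.val) :
    Reaches (x, k) (y, l) (2 * phiDist n (x, k) (y, l) + 2) := by
  set p := lgc (phi1 n (x, k)).1 (phi1 n (y, l)).1 with hp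
  set q := lgc (phi1 n (x, k)).2 (phi1 n (y, l)).2 with hq
  have hpl : p ≤ l.val := by simpa using lgc_le_right (phi1 n (x, k)).1 (phi1 n (y, l)).1
  have hqk : q ≤ n - k.val := by simpa using lgc_le_left (phi1 n (x, k)).2 (phi1 n (y, l)).2
  have hdist : phiDist n (x, k) (y, l) =
      max (k.val + l.val - 2 * p) (n - k.val + (n - l.val) - 2 * q) := by
    simp [phiDist, treeDist, hp, hq]
  have hband : ∀ z ∈ x ∆ y, p ≤ z.val ∧ z.val + q < n := fun z hz =>
    lgc_phi1_le_val_of_mem_symmDiff hz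
  clear_value p q
  clear hp hq
  have hk := ZMod.val_lt k
  set r := max k.val (n - 1 - q) with hr
  set T₁ := {z ∈ x ∆ y | p < z.val ∧ z.val ≤ r}
  set T₂ := {z ∈ x ∆ y | z.val = p}
  have hy : x ∆ T₁ ∆ T₂ = y := by
    rw [symmDiff_assoc, sep_symmDiff_sep_eq_self fun z hz => ?_, symmDiff_symmDiff_cancel_left]
    have := hband z hz
    simp only [Xor]
    omega
  have h₁ : Reaches (x, k) (x, (r : ZMod n)) (r - k.val) := by
    simpa using reaches_sweep_up (b := r) (le_max_left _ _) (by omega) x ∅ (by simp)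
  have h₂ : Reaches (x, (r : ZMod n)) (x ∆ T₁, (p : ZMod n)) (r - p) :=
    reaches_sweep_down (by omega) (by omega) x T₁ fun z hz => hz.2
  have h₃ : Reaches (x ∆ T₁, (p : ZMod n)) (y, (p : ZMod n)) 2 := by
    rw [← hy]
    refine reaches_toggle _ _ _ fun z hz => ?_
    rw [Set.mem_singleton_iff, ← hz.2, ZMod.natCast_zmod_val]
  have h₄ : Reaches (y, (p : ZMod n)) (y, l) (l.val - p) := by
    simpa using reaches_sweep_up hpl (ZMod.val_lt l) y ∅ (by simp)
  refine (((h₁.trans h₂).trans h₃).trans h₄).mono ?_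
  omega

theorem reaches_phiDist (u v : Lamp n) : Reaches u v (2 * phiDist n u v + 2) := by
  obtain ⟨x, k⟩ := u
  obtain ⟨y, l⟩ := v
  rcases le_total l.val k.val with hlk | hkl
  · exact reaches_of_val_le hlk
  · simpa [phiDist_comm] using (reaches_of_val_le (x := y) (y := x) hkl).symm

end UpperBound

section LowerBound

variable {n : ℕ}

/-- The distance from `k` to the edge `{n - 1, 0}` of the cycle, across which `phi1` jumps. -/
def seamDist (k : ZMod n) : ℕ := min k.val (n - 1 - k.val)

/-- Capping by the cost of a detour through the seam edge makes this grow by at most `3` per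
generator, although `phiDist` jumps there; the `Nat.dist` term keeps the cap `3`-Lipschitz. -/
noncomputable def cappedDist (n : ℕ) (u v : Lamp n) : ℕ :=
  min (max (phiDist n u v) (3 * Nat.dist u.2.val v.2.val)) (3 * (seamDist u.2 + seamDist v.2 + 1))

theorem cappedDist_self (u : Lamp n) : cappedDist n u u = 0 := by
  simp [cappedDist, phiDist_self]

theorem cappedDist_comm (u v : Lamp n) : cappedDist n u v = cappedDist n v u := by
  rw [cappedDist, cappedDist, phiDist_comm, Nat.dist_comm, Nat.add_comm (seamDist u.2)]

theorem seamDist_le_add_dist (k l : ZMod n) : seamDist k ≤ seamDist l + Nat.dist k.val l.val := by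
  unfold seamDist Nat.dist
  omega

theorem cappedDist_triangle (u v w : Lamp n) :
    cappedDist n u w ≤ cappedDist n u v + cappedDist n v w := by
  have := phiDist_triangle u v w
  have := Nat.dist.triangle_inequality u.2.val v.2.val w.2.val
  have := seamDist_le_add_dist u.2 v.2
  have := seamDist_le_add_dist w.2 v.2
  rw [Nat.dist_comm] at this
  unfold cappedDist
  omega

theorem cappedDist_succ_le [NeZero n] {x T : Set (ZMod n)} {k : ZMod n} (hT : T ⊆ {k + 1}) :
    cappedDist n (x, k) (x ∆ T, k + 1) ≤ 3 := by
  by_cases hk : k.val + 1 < n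
  · have := phiDist_succ_le (x := x) hk hT
    have := ZMod.val_add_one_of_lt hk
    unfold cappedDist Nat.dist
    simp only [this]
    omega
  · have hk' : k.val + 1 = n := by have := ZMod.val_lt k; omega
    have hwrap : k + 1 = 0 := by
      rw [← ZMod.natCast_zmod_val k, ← Nat.cast_add_one, hk', ZMod.natCast_self]
    unfold cappedDist seamDist
    simp only [hwrap, ZMod.val_zero]
    omega

theorem cappedDist_le_of_reaches [NeZero n] {u v : Lamp n} {m : ℕ} (h : Reaches u v m) :
    cappedDist n u v ≤ 3 * m := by
  refine le_mul_of_reaches _ 3 cappedDist_self cappedDist_comm cappedDist_triangle ?_ h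
  rintro ⟨x, k⟩ s (rfl | rfl)
  · simpa [lampMul_lampT_s13] using cappedDist_succ_le (x := x) (Set.empty_subset {k + 1})
  · rw [lampMul_lampTA_s13]
    exact cappedDist_succ_le subset_rfl

theorem phiDist_le_cappedDist (h6 : 6 ∣ n) {u v : Lamp n} (hu : u ∈ lampP1 n)
    (hv : v ∈ lampP1 n) : phiDist n u v ≤ 2 * cappedDist n u v + 6 := by
  obtain ⟨x, k⟩ := u
  obtain ⟨y, l⟩ := v
  obtain ⟨m, rfl⟩ := h6
  obtain ⟨hk₁, hk₂⟩ := hu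
  obtain ⟨hl₁, hl₂⟩ := hv
  dsimp only at hk₁ hk₂ hl₁ hl₂
  have h₁ := Nat.sub_le ((phi1 (6 * m) (x, k)).1.length + (phi1 (6 * m) (y, l)).1.length)
    (2 * lgc (phi1 (6 * m) (x, k)).1 (phi1 (6 * m) (y, l)).1)
  have h₂ := Nat.sub_le ((phi1 (6 * m) (x, k)).2.length + (phi1 (6 * m) (y, l)).2.length)
    (2 * lgc (phi1 (6 * m) (x, k)).2 (phi1 (6 * m) (y, l)).2)
  simp only [length_phi1_fst, length_phi1_snd] at h₁ h₂
  unfold cappedDist seamDist phiDist treeDist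
  simp only [length_phi1_fst, length_phi1_snd]
  omega

end LowerBound

/-- For `(x,k), (y,l) ∈ P_{1,n}`:
`(1/6)·d_∞(φ(x,k), φ(y,l)) - 2 ≤ ρ((x,k),(y,l)) ≤ 2·d_∞(φ(x,k), φ(y,l)) + 2`,
so the bijections `φ_{1,n} : (P_{1,n}, ρ) → (W_n, d_∞)` have uniformly bounded
distortions. -/
theorem phi1_bilipschitz
    (n : ℕ) (hn : 0 < n) (h6 : 6 ∣ n)
    (x y : Set (ZMod n)) (k l : ZMod n)
    (hxk : ((x, k) : Lamp n) ∈ lampP1 n) (hyl : ((y, l) : Lamp n) ∈ lampP1 n) :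
    (1 / 6 : ℝ) * (max (treeDist (phi1 n (x, k)).1 (phi1 n (y, l)).1)
        (treeDist (phi1 n (x, k)).2 (phi1 n (y, l)).2) : ℝ) - 2 ≤
      (lampDist n (x, k) (y, l) : ℝ) ∧
    (lampDist n (x, k) (y, l) : ℝ) ≤
      2 * (max (treeDist (phi1 n (x, k)).1 (phi1 n (y, l)).1)
        (treeDist (phi1 n (x, k)).2 (phi1 n (y, l)).2) : ℝ) + 2 := by
  have : NeZero n := ⟨hn.ne'⟩
  have hreach := reaches_phiDist (x, k) (y, l)
  have hupper := lampDist_le_of_reaches hreach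
  have hcapped := cappedDist_le_of_reaches hreach.reaches_lampDist
  have hlower := phiDist_le_cappedDist h6 hxk hyl
  rw [← Nat.cast_max, ← phiDist]
  constructor
  · have : (phiDist n (x, k) (y, l) : ℝ) ≤ 6 * lampDist n (x, k) (y, l) + 6 := by
      exact_mod_cast (by omega)
    linarith
  · exact_mod_cast hupper
end

section
/- There exist a constant C ≥ 1, a subset V of the infinite lamplighter group Z_2 ≀ Z (with word metric ρ with respect to {t, ta}), a number r > 0, and a bijection ψ from the vertex set of the infinite rooted binary tree onto V such that r·d_T(s,s') ≤ ρ(ψ(s),ψ(s')) ≤ C·r·d_T(s,s') for all vertices s, s'; that is, the Cayley graph of Z_2 ≀ Z contains a bilipschitz copy of the infinite rooted binary tree. -/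
open scoped symmDiff

/-- Elements of the infinite lamplighter group `Z₂ ≀ Z`: a finite set of lit lamps
and a position. -/
abbrev LampZ := Finset ℤ × ℤ

/-- Group multiplication `(x,g)·(y,h) = (x △ (g+y), g+h)`. -/
def lampZMul (u v : LampZ) : LampZ :=
  (u.1 ∆ (v.1.image (u.2 + ·)), u.2 + v.2)

/-- Group inverse. -/
def lampZInv (u : LampZ) : LampZ :=
  (u.1.image (· - u.2), -u.2)

/-- The generator `t = (∅, 1)`. -/
def lampZT : LampZ := (∅, 1)

/-- The generator `a = ({0}, 0)`. -/
def lampZA : LampZ := ({0}, 0)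

/-- The generator `ta`. -/
def lampZTA : LampZ := lampZMul lampZT lampZA

/-- Word metric on `Z₂ ≀ Z` w.r.t. a generating set `S`. -/
noncomputable def wordDistZ (S : Set LampZ) (u v : LampZ) : ℕ :=
  sInf {m | ∃ w : List LampZ, w.length = m ∧
    (∀ s ∈ w, s ∈ S ∨ ∃ g ∈ S, s = lampZInv g) ∧ v = w.foldl lampZMul u}

/-- The word metric `ρ` on `Z₂ ≀ Z` w.r.t. `{t, ta}`. -/
noncomputable def lampZDist (u v : LampZ) : ℕ :=
  wordDistZ {lampZT, lampZTA} u v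

/-!
Send a vertex `s` of the tree to the endpoint `ψ s` of the path from the identity that spells
`s`, reading `0` as `t` and `1` as `ta`. Then `ρ (ψ s) (ψ s') = d_T s s'`. Walking back from
`ψ s` to the image of the longest common prefix of `s` and `s'` and then forward to `ψ s'` gives
a path of length `d_T s s'`. Conversely, let `c` be the length of that prefix. Either `ψ s` and
`ψ s'` differ at lamp `c + 1`, which a path can only toggle while crossing the edge between
positions `c` and `c + 1`, or one of `s`, `s'` extends the other and the positions alone are
`d_T s s'` apart. In both cases the potential `lampPotential` is `d_T s s'` at `ψ s`, vanishes
at `ψ s'`, and drops by at most one per generator.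
-/

lemma lampZMul_lampZMul_lampZInv (u g : LampZ) : lampZMul (lampZMul u g) (lampZInv g) = u := by
  obtain ⟨x, k⟩ := u
  obtain ⟨y, h⟩ := g
  simp [lampZMul, lampZInv, Finset.image_image, Function.comp_def, symmDiff_symmDiff_cancel_right]

lemma foldl_lampZMul_reverse_map_lampZInv (u : LampZ) (w : List LampZ) :
    (w.reverse.map lampZInv).foldl lampZMul (w.foldl lampZMul u) = u := by
  induction w using List.reverseRecOn with
  | nil => rfl
  | append_singleton w g ih =>
    simpa only [List.foldl_append, List.reverse_append, List.map_append, List.foldl_cons,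
      List.foldl_nil, List.reverse_singleton, List.map_cons, List.map_nil, List.singleton_append,
      lampZMul_lampZMul_lampZInv] using ih

def IsGenOrInv (S : Set LampZ) (s : LampZ) : Prop := s ∈ S ∨ ∃ g ∈ S, s = lampZInv g

section WordDist

variable {S : Set LampZ}

lemma wordDistZ_le_length {u v : LampZ} {w : List LampZ} (hw : ∀ s ∈ w, IsGenOrInv S s)
    (hv : v = w.foldl lampZMul u) : wordDistZ S u v ≤ w.length :=
  Nat.sInf_le ⟨w, rfl, hw, hv⟩

lemma le_length_add_foldl_of_le_mul_add_one {f : LampZ → ℕ}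
    (hf : ∀ u s, IsGenOrInv S s → f u ≤ f (lampZMul u s) + 1) (u : LampZ) (w : List LampZ)
    (hw : ∀ s ∈ w, IsGenOrInv S s) : f u ≤ w.length + f (w.foldl lampZMul u) := by
  induction w generalizing u with
  | nil => simp
  | cons s w ih =>
    have := hf u s (hw s (by simp))
    have := ih (lampZMul u s) (fun s' hs' => hw s' (by simp [hs']))
    simp only [List.length_cons, List.foldl_cons]
    omega

lemma le_wordDistZ_add_of_le_mul_add_one {f : LampZ → ℕ}
    (hf : ∀ u s, IsGenOrInv S s → f u ≤ f (lampZMul u s) + 1) {u v : LampZ} {w : List LampZ}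
    (hw : ∀ s ∈ w, IsGenOrInv S s) (hv : v = w.foldl lampZMul u) :
    f u ≤ wordDistZ S u v + f v := by
  obtain ⟨w', hlen, hw', hv'⟩ := Nat.sInf_mem (s := {m | ∃ w : List LampZ, w.length = m ∧
    (∀ s ∈ w, IsGenOrInv S s) ∧ v = w.foldl lampZMul u}) ⟨w.length, w, rfl, hw, hv⟩
  have := le_length_add_foldl_of_le_mul_add_one hf u w' hw'
  rwa [← hv', hlen] at this

end WordDist

lemma lampZMul_empty (x : Finset ℤ) (k h : ℤ) : lampZMul (x, k) (∅, h) = (x, k + h) := by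
  simp [lampZMul]

lemma lampZMul_singleton (x : Finset ℤ) (k j h : ℤ) :
    lampZMul (x, k) ({j}, h) = (x ∆ {k + j}, k + h) := by
  simp [lampZMul]

lemma lampZTA_eq : lampZTA = ({1}, 1) := by
  simp [lampZTA, lampZT, lampZA, lampZMul]

def lampZGen (b : Bool) : LampZ := if b then lampZTA else lampZT

lemma isGenOrInv_lampZGen (b : Bool) : IsGenOrInv {lampZT, lampZTA} (lampZGen b) := by
  cases b <;> simp [IsGenOrInv, lampZGen]

lemma isGenOrInv_lampZInv_lampZGen (b : Bool) :
    IsGenOrInv {lampZT, lampZTA} (lampZInv (lampZGen b)) := by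
  cases b <;> simp [IsGenOrInv, lampZGen]

lemma lampZMul_lampZGen (x : Finset ℤ) (k : ℤ) (b : Bool) :
    lampZMul (x, k) (lampZGen b) = (if b then x ∆ {k + 1} else x, k + 1) := by
  cases b <;> simp [lampZGen, lampZT, lampZTA_eq, lampZMul_empty, lampZMul_singleton]

lemma lampZMul_of_isGenOrInv (x : Finset ℤ) (k : ℤ) {s : LampZ}
    (hs : IsGenOrInv {lampZT, lampZTA} s) :
    ∃ (c : ℤ) (b : Bool) (k' : ℤ),
      lampZMul (x, k) s = (if b then x ∆ {c + 1} else x, k') ∧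
        (k = c ∧ k' = c + 1 ∨ k = c + 1 ∧ k' = c) := by
  rcases hs with (rfl | rfl) | ⟨g, (rfl | rfl), rfl⟩
  · exact ⟨k, false, k + 1, lampZMul_empty x k 1, by omega⟩
  · exact ⟨k, true, k + 1, by rw [lampZTA_eq, lampZMul_singleton]; rfl, by omega⟩
  · refine ⟨k - 1, false, k - 1, ?_, by omega⟩
    simp [lampZInv, lampZT, lampZMul_empty, sub_eq_add_neg]
  · refine ⟨k - 1, true, k - 1, ?_, by omega⟩
    simp [lampZInv, lampZTA_eq, lampZMul_singleton, sub_eq_add_neg]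

/-- A path from `u` to `v` that changes the lamp at `c + 1` must cross the edge `{c, c + 1}`. -/
def lampPotential (v : LampZ) (c : ℤ) (u : LampZ) : ℕ :=
  if c + 1 ∈ u.1 ∆ v.1 then (u.2 - c).natAbs + (v.2 - c).natAbs else (u.2 - v.2).natAbs

lemma lampPotential_self (v : LampZ) (c : ℤ) : lampPotential v c v = 0 := by
  simp [lampPotential]

lemma lampPotential_le_mul_add_one (v : LampZ) (c : ℤ) (u : LampZ) {s : LampZ}
    (hs : IsGenOrInv {lampZT, lampZTA} s) :
    lampPotential v c u ≤ lampPotential v c (lampZMul u s) + 1 := by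
  obtain ⟨x, k⟩ := u
  obtain ⟨c', b, k', hmul, hk⟩ := lampZMul_of_isGenOrInv x k hs
  rw [hmul]
  unfold lampPotential
  dsimp only
  by_cases hflip : b = true ∧ c = c'
  · obtain ⟨rfl, rfl⟩ := hflip
    have hmem : c + 1 ∈ (x ∆ {c + 1}) ∆ v.1 ↔ c + 1 ∉ x ∆ v.1 := by
      simp only [Finset.mem_symmDiff, Finset.mem_singleton]
      tauto
    rw [if_pos rfl, if_congr hmem rfl rfl]
    split_ifs <;> omega
  · have hmem : c + 1 ∈ (if b then x ∆ {c' + 1} else x) ∆ v.1 ↔ c + 1 ∈ x ∆ v.1 := by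
      cases b <;> simp_all [Finset.mem_symmDiff]
    rw [if_congr hmem rfl rfl]
    split_ifs <;> omega

lemma lgc_le_length_left : ∀ s s' : List Bool, lgc s s' ≤ s.length
  | [], _ | _ :: _, [] => by simp [lgc]
  | a :: s, b :: s' => by
    have := lgc_le_length_left s s'
    simp only [lgc, List.length_cons]
    split_ifs <;> omega

lemma lgc_le_length_right : ∀ s s' : List Bool, lgc s s' ≤ s'.length
  | [], _ | _ :: _, [] => by simp [lgc]
  | a :: s, b :: s' => by
    have := lgc_le_length_right s s'
    simp only [lgc, List.length_cons]
    split_ifs <;> omega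

lemma take_lgc : ∀ s s' : List Bool, s.take (lgc s s') = s'.take (lgc s s')
  | [], _ | _ :: _, [] => by simp [lgc]
  | a :: s, b :: s' => by
    by_cases h : a = b
    · simp [lgc, h, take_lgc s s']
    · simp [lgc, h]

lemma lgc_eq_length_or_getElem?_ne :
    ∀ s s' : List Bool, lgc s s' = s.length ∨ s[lgc s s']? ≠ s'[lgc s s']?
  | [], _ => by simp [lgc]
  | _ :: _, [] => by simp [lgc]
  | a :: s, b :: s' => by
    by_cases h : a = b
    · simpa [lgc, h] using lgc_eq_length_or_getElem?_ne s s'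
    · simp [lgc, h]

lemma eq_of_treeDist_eq_zero {s s' : List Bool} (h : treeDist s s' = 0) : s = s' := by
  have hs := lgc_le_length_left s s'
  have hs' := lgc_le_length_right s s'
  have hlgc : lgc s s' = s.length ∧ lgc s s' = s'.length := by
    unfold treeDist at h
    omega
  calc s = s.take (lgc s s') := by rw [hlgc.1, List.take_length]
    _ = s'.take (lgc s s') := take_lgc s s'
    _ = s' := by rw [hlgc.2, List.take_length]

/-- The lamplighter walks to position `|s|`, lighting lamp `i + 1` exactly when `s i = 1`. -/
def treeToLampZ (s : List Bool) : LampZ := (s.map lampZGen).foldl lampZMul (∅, 0)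

lemma treeToLampZ_append (p q : List Bool) :
    treeToLampZ (p ++ q) = (q.map lampZGen).foldl lampZMul (treeToLampZ p) := by
  simp [treeToLampZ]

lemma treeToLampZ_concat (s : List Bool) (b : Bool) :
    treeToLampZ (s ++ [b]) = lampZMul (treeToLampZ s) (lampZGen b) := by
  simp [treeToLampZ_append]

lemma treeToLampZ_snd (s : List Bool) : (treeToLampZ s).2 = s.length := by
  induction s using List.reverseRecOn with
  | nil => rfl
  | append_singleton s b ih =>
    rw [treeToLampZ_concat, ← Prod.mk.eta (p := treeToLampZ s), lampZMul_lampZGen, ih]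
    simp

lemma natCast_add_one_mem_treeToLampZ_fst {s : List Bool} {i : ℕ} :
    (i + 1 : ℤ) ∈ (treeToLampZ s).1 ↔ s[i]? = some true := by
  induction s using List.reverseRecOn with
  | nil => simp [treeToLampZ]
  | append_singleton s b ih =>
    rw [treeToLampZ_concat, ← Prod.mk.eta (p := treeToLampZ s), lampZMul_lampZGen,
      treeToLampZ_snd]
    rcases lt_trichotomy i s.length with hi | rfl | hi
    · have hne : (i + 1 : ℤ) ≠ s.length + 1 := by omega
      cases b <;> simp [List.getElem?_append_left hi, Finset.mem_symmDiff, hne, ih]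
    · cases b <;> simp [Finset.mem_symmDiff, ih]
    · have hne : (i + 1 : ℤ) ≠ s.length + 1 := by omega
      have hnone : s[i]? = none := List.getElem?_eq_none (by omega)
      have hnone' : (s ++ [b])[i]? = none := List.getElem?_eq_none (by simp; omega)
      cases b <;> simp [Finset.mem_symmDiff, hne, ih, hnone, hnone']

lemma lampPotential_treeToLampZ (s s' : List Bool) :
    lampPotential (treeToLampZ s') (lgc s s') (treeToLampZ s) = treeDist s s' := by
  set c := lgc s s'
  have hs : c ≤ s.length := lgc_le_length_left s s'
  have hs' : c ≤ s'.length := lgc_le_length_right s s'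
  have key : (c + 1 : ℤ) ∈ (treeToLampZ s).1 ∆ (treeToLampZ s').1 ∨
      c = s.length ∨ c = s'.length := by
    rcases lgc_eq_length_or_getElem?_ne s s' with h | h
    · exact Or.inr (Or.inl h)
    by_contra! hcon
    simp only [Finset.mem_symmDiff, natCast_add_one_mem_treeToLampZ_fst] at hcon
    refine h ?_
    rcases hb : s[c]? with _ | b <;> rcases hb' : s'[c]? with _ | b'
    · rfl
    · simp at hb; omega
    · simp at hb'; omega
    · cases b <;> cases b' <;> simp_all
  unfold lampPotential treeDist
  rw [treeToLampZ_snd, treeToLampZ_snd]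
  split_ifs with hmem
  · omega
  · have := key.resolve_left hmem
    omega

def treePath (s s' : List Bool) : List LampZ :=
  ((s.drop (lgc s s')).map lampZGen).reverse.map lampZInv ++ (s'.drop (lgc s s')).map lampZGen

lemma isGenOrInv_of_mem_treePath {s s' : List Bool} {g : LampZ} (hg : g ∈ treePath s s') :
    IsGenOrInv {lampZT, lampZTA} g := by
  simp only [treePath, List.mem_append, List.mem_map, List.mem_reverse] at hg
  rcases hg with ⟨_, ⟨b, -, rfl⟩, rfl⟩ | ⟨b, -, rfl⟩
  exacts [isGenOrInv_lampZInv_lampZGen b, isGenOrInv_lampZGen b]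

lemma length_treePath (s s' : List Bool) : (treePath s s').length = treeDist s s' := by
  have := lgc_le_length_left s s'
  have := lgc_le_length_right s s'
  simp only [treePath, List.length_append, List.length_map, List.length_reverse, List.length_drop,
    treeDist]
  omega

lemma treeToLampZ_eq_foldl_treePath (s s' : List Bool) :
    treeToLampZ s' = (treePath s s').foldl lampZMul (treeToLampZ s) := by
  set c := lgc s s'
  have ht : s.take c = s'.take c := take_lgc s s'
  have hs : treeToLampZ s = ((s.drop c).map lampZGen).foldl lampZMul (treeToLampZ (s.take c)) := by
    rw [← treeToLampZ_append, List.take_append_drop]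
  have hs' : treeToLampZ s' =
      ((s'.drop c).map lampZGen).foldl lampZMul (treeToLampZ (s.take c)) := by
    rw [ht, ← treeToLampZ_append, List.take_append_drop]
  rw [treePath, List.foldl_append, hs, foldl_lampZMul_reverse_map_lampZInv, ← hs']

theorem lampZDist_treeToLampZ (s s' : List Bool) :
    lampZDist (treeToLampZ s) (treeToLampZ s') = treeDist s s' := by
  have hw : ∀ g ∈ treePath s s', IsGenOrInv {lampZT, lampZTA} g :=
    fun _ => isGenOrInv_of_mem_treePath
  have hv := treeToLampZ_eq_foldl_treePath s s'
  apply le_antisymm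
  · exact length_treePath s s' ▸ wordDistZ_le_length hw hv
  · calc treeDist s s' = lampPotential (treeToLampZ s') (lgc s s') (treeToLampZ s) :=
          (lampPotential_treeToLampZ s s').symm
      _ ≤ lampZDist (treeToLampZ s) (treeToLampZ s') +
          lampPotential (treeToLampZ s') (lgc s s') (treeToLampZ s') :=
        le_wordDistZ_add_of_le_mul_add_one
          (fun u _ => lampPotential_le_mul_add_one (treeToLampZ s') (lgc s s') u) hw hv
      _ = lampZDist (treeToLampZ s) (treeToLampZ s') := by rw [lampPotential_self, add_zero]

/-- The Cayley graph of `Z₂ ≀ Z` (generating set `{t, ta}`) contains a bilipschitz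
copy of the infinite rooted binary tree; the copy is the range of the bijection `ψ`. -/
theorem infinite_binary_tree_embeds_in_lamplighter :
    ∃ (C : ℝ) (V : Set LampZ) (r : ℝ) (ψ : List Bool → LampZ),
      1 ≤ C ∧ 0 < r ∧ Function.Injective ψ ∧ Set.range ψ = V ∧
      ∀ s s' : List Bool,
        r * (treeDist s s' : ℝ) ≤ (lampZDist (ψ s) (ψ s') : ℝ) ∧
        (lampZDist (ψ s) (ψ s') : ℝ) ≤ C * r * (treeDist s s' : ℝ) := by
  refine ⟨1, Set.range treeToLampZ, 1, treeToLampZ, le_rfl, one_pos, fun s s' h => ?_, rfl,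
    fun s s' => ?_⟩
  · apply eq_of_treeDist_eq_zero
    rw [← lampZDist_treeToLampZ, h]
    exact Nat.le_zero.mp (wordDistZ_le_length (w := []) (by simp) rfl)
  · simp [lampZDist_treeToLampZ]
end
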